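/- arXiv:hep-th/0212307 — 4 statements merged into one kernel-verified Lean document; each statement's English description precedes it below -/
import Mathlib

section
/- Let U be a 2-dimensional complex inner product space, regarded as a 4-dimensional real inner product space with g = Re⟨·,·⟩, and let ξ be a complex-valued alternating ℂ-bilinear form on U of unit length, i.e. |ξ(b₁,b₂)| = 1 for some (equivalently, any) orthonormal ℂ-basis (b₁,b₂) of U. Then there exist orthogonal complex structures J₁ and J₂ on the real inner product space (U, g) such that (Re ξ)(u,v) = g(J₁u, v) and (Im ξ)(u,v) = g(J₂u, v) for all u, v ∈ U; that is, Re ξ and Im ξ are Hermitian 2-forms for the metric g (for, in general, different compatible complex structures on U). -/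
open scoped InnerProductSpace

/-!
In an orthonormal basis `b`, every alternating `ℂ`-bilinear 2-form is `ξ(b₀, b₁)` times the
determinant of coordinates, and that determinant is `⟪K u, v⟫` for the conjugate-linear map
`K (u₀ b₀ + u₁ b₁) = -ū₁ b₀ + ū₀ b₁` (left multiplication by the quaternion `j` on `ℂ² ≅ ℍ`).
`K` squares to `-1` and satisfies `⟪K u, K v⟫ = conj ⟪u, v⟫`, so for `c = ξ(b₀, b₁)` of modulus one
`c̄ K` is an orthogonal complex structure with `⟪c̄ K u, v⟫ = ξ(u, v)`. Applying this to `ξ` and to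
`-i ξ`, whose real part is `Im ξ`, gives `J₁` and `J₂`.
-/

namespace OrthonormalBasis

variable {U : Type*} [NormedAddCommGroup U] [InnerProductSpace ℂ U]
  (b : OrthonormalBasis (Fin 2) ℂ U)

theorem alternatingMap_apply_fin_two (ξ : U [⋀^Fin 2]→ₗ[ℂ] ℂ) (u v : U) :
    ξ ![u, v] = ξ ![b 0, b 1] * (⟪b 0, u⟫_ℂ * ⟪b 1, v⟫_ℂ - ⟪b 1, u⟫_ℂ * ⟪b 0, v⟫_ℂ) := by
  have hcoe : ![b 0, b 1] = ⇑b.toBasis := by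
    ext i; fin_cases i <;> simp
  rw [hcoe]
  conv_lhs => rw [ξ.eq_smul_basis_det b.toBasis]
  simp only [AlternatingMap.smul_apply, Module.Basis.det_apply, Matrix.det_fin_two,
    Module.Basis.toMatrix_apply, OrthonormalBasis.coe_toBasis_repr_apply,
    OrthonormalBasis.repr_apply_apply, smul_eq_mul, Matrix.cons_val_zero, Matrix.cons_val_one]
  ring

noncomputable def quaternionicJ : U →ₗ[ℝ] U where
  toFun u := (-star ⟪b 1, u⟫_ℂ) • b 0 + star ⟪b 0, u⟫_ℂ • b 1
  map_add' u v := by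
    simp only [inner_add_right, star_add, neg_add, add_smul]
    abel
  map_smul' r u := by
    simp only [← algebraMap_smul ℂ r, inner_smul_right, star_mul', Complex.coe_algebraMap,
      Complex.star_def, Complex.conj_ofReal, RingHom.id_apply, smul_add, smul_smul]
    module

theorem quaternionicJ_apply (u : U) :
    b.quaternionicJ u = (-star ⟪b 1, u⟫_ℂ) • b 0 + star ⟪b 0, u⟫_ℂ • b 1 := rfl

theorem inner_quaternionicJ_left (u v : U) :
    ⟪b.quaternionicJ u, v⟫_ℂ = ⟪b 0, u⟫_ℂ * ⟪b 1, v⟫_ℂ - ⟪b 1, u⟫_ℂ * ⟪b 0, v⟫_ℂ := by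
  rw [quaternionicJ_apply, inner_add_left, inner_smul_left, inner_smul_left]
  simp only [map_neg, Complex.star_def, Complex.conj_conj]
  ring

theorem inner_zero_quaternionicJ (u : U) : ⟪b 0, b.quaternionicJ u⟫_ℂ = -star ⟪b 1, u⟫_ℂ := by
  simp [quaternionicJ_apply, inner_smul_right, b.inner_eq_ite]

theorem inner_one_quaternionicJ (u : U) : ⟪b 1, b.quaternionicJ u⟫_ℂ = star ⟪b 0, u⟫_ℂ := by
  simp [quaternionicJ_apply, inner_smul_right, b.inner_eq_ite]

theorem quaternionicJ_smul (a : ℂ) (u : U) :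
    b.quaternionicJ (a • u) = star a • b.quaternionicJ u := by
  simp only [quaternionicJ_apply, inner_smul_right, star_mul', smul_add, smul_smul, mul_neg]

theorem quaternionicJ_quaternionicJ (u : U) : b.quaternionicJ (b.quaternionicJ u) = -u := by
  conv_rhs => rw [← b.sum_repr' u, Fin.sum_univ_two]
  rw [quaternionicJ_apply, inner_zero_quaternionicJ, inner_one_quaternionicJ]
  simp only [star_neg, star_star, neg_smul, neg_add]

theorem inner_quaternionicJ_quaternionicJ (u v : U) :
    ⟪b.quaternionicJ u, b.quaternionicJ v⟫_ℂ = star ⟪u, v⟫_ℂ := by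
  rw [inner_quaternionicJ_left, inner_zero_quaternionicJ, inner_one_quaternionicJ]
  simp only [Complex.star_def, inner_conj_symm]
  rw [← b.sum_inner_mul_inner v u, Fin.sum_univ_two]
  ring

theorem exists_orthogonalComplexStructure_inner_eq (ξ : U [⋀^Fin 2]→ₗ[ℂ] ℂ)
    (hb : ‖ξ ![b 0, b 1]‖ = 1) :
    ∃ J : U →ₗ[ℝ] U, (∀ u, J (J u) = -u) ∧ (∀ u v, (⟪J u, J v⟫_ℂ).re = (⟪u, v⟫_ℂ).re) ∧
      ∀ u v, ⟪J u, v⟫_ℂ = ξ ![u, v] := by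
  set c := ξ ![b 0, b 1] with hc_def
  have hc : star c * c = 1 := by
    rw [Complex.star_def, Complex.conj_mul', hb]
    norm_num
  refine ⟨star c • b.quaternionicJ, fun u => ?_, fun u v => ?_, fun u v => ?_⟩
  · rw [LinearMap.smul_apply, LinearMap.smul_apply, quaternionicJ_smul,
      quaternionicJ_quaternionicJ, smul_smul, star_star, hc, one_smul]
  · rw [LinearMap.smul_apply, LinearMap.smul_apply, inner_smul_left, inner_smul_right,
      inner_quaternionicJ_quaternionicJ, ← mul_assoc, ← Complex.star_def, star_star, mul_comm c,
      hc, one_mul, Complex.star_def, Complex.conj_re]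
  · rw [LinearMap.smul_apply, inner_smul_left, inner_quaternionicJ_left,
      b.alternatingMap_apply_fin_two ξ, ← hc_def, ← Complex.star_def, star_star]

end OrthonormalBasis

theorem re_and_im_of_unit_two_zero_form_are_hermitian_general
    {U : Type*} [NormedAddCommGroup U] [InnerProductSpace ℂ U]
    (ξ : U [⋀^Fin 2]→ₗ[ℂ] ℂ)
    (hξ : ∃ b : OrthonormalBasis (Fin 2) ℂ U, ‖ξ ![b 0, b 1]‖ = 1) :
    ∃ J₁ J₂ : U →ₗ[ℝ] U,
      (∀ u : U, J₁ (J₁ u) = -u) ∧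
      (∀ u v : U, (⟪J₁ u, J₁ v⟫_ℂ).re = (⟪u, v⟫_ℂ).re) ∧
      (∀ u : U, J₂ (J₂ u) = -u) ∧
      (∀ u v : U, (⟪J₂ u, J₂ v⟫_ℂ).re = (⟪u, v⟫_ℂ).re) ∧
      (∀ u v : U, (ξ ![u, v]).re = (⟪J₁ u, v⟫_ℂ).re) ∧
      (∀ u v : U, (ξ ![u, v]).im = (⟪J₂ u, v⟫_ℂ).re) := by
  obtain ⟨b, hb⟩ := hξ
  obtain ⟨J₁, hJ₁, hJ₁_isometry, hJ₁_inner⟩ := b.exists_orthogonalComplexStructure_inner_eq ξ hb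
  have hb' : ‖((-Complex.I) • ξ) ![b 0, b 1]‖ = 1 := by simp [hb]
  obtain ⟨J₂, hJ₂, hJ₂_isometry, hJ₂_inner⟩ :=
    b.exists_orthogonalComplexStructure_inner_eq ((-Complex.I) • ξ) hb'
  refine ⟨J₁, J₂, hJ₁, hJ₁_isometry, hJ₂, hJ₂_isometry, fun u v => ?_, fun u v => ?_⟩
  · rw [hJ₁_inner]
  · simp [hJ₂_inner]

/-- Let `U` be a 2-dimensional complex inner product space, regarded as a
4-dimensional real inner product space with `g = Re ⟪·,·⟫`, and let `ξ` be a complex-valued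
alternating `ℂ`-bilinear form on `U` of unit length (i.e. `|ξ (b₁, b₂)| = 1` for some
orthonormal `ℂ`-basis `(b₁, b₂)` of `U`).  Then there exist orthogonal complex structures
`J₁` and `J₂` on the real inner product space `(U, g)` — i.e. `ℝ`-linear maps with
`J ∘ J = -id` preserving `g` — such that `(Re ξ)(u,v) = g (J₁ u) v` and
`(Im ξ)(u,v) = g (J₂ u) v` for all `u, v ∈ U`: the real and imaginary parts of `ξ` are
Hermitian 2-forms for the metric `g`. -/
theorem re_and_im_of_unit_two_zero_form_are_hermitian
    {U : Type*} [NormedAddCommGroup U] [InnerProductSpace ℂ U]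
    (hdim : Module.finrank ℂ U = 2)
    (ξ : U [⋀^Fin 2]→ₗ[ℂ] ℂ)
    (hξ : ∃ b : OrthonormalBasis (Fin 2) ℂ U, ‖ξ ![b 0, b 1]‖ = 1) :
    ∃ J₁ J₂ : U →ₗ[ℝ] U,
      (∀ u : U, J₁ (J₁ u) = -u) ∧
      (∀ u v : U, (⟪J₁ u, J₁ v⟫_ℂ).re = (⟪u, v⟫_ℂ).re) ∧
      (∀ u : U, J₂ (J₂ u) = -u) ∧
      (∀ u v : U, (⟪J₂ u, J₂ v⟫_ℂ).re = (⟪u, v⟫_ℂ).re) ∧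
      (∀ u v : U, (ξ ![u, v]).re = (⟪J₁ u, v⟫_ℂ).re) ∧
      (∀ u v : U, (ξ ![u, v]).im = (⟪J₂ u, v⟫_ℂ).re) :=
  re_and_im_of_unit_two_zero_form_are_hermitian_general ξ hξ
end

section
/- Let H and F be real inner product spaces with dim H = 4 and dim F = 2, and let V = H ⊕ F with the direct-sum inner product. Let J_H and J_F be orthogonal complex structures on H and F respectively, with Hermitian 2-forms ω_H and ω_F, pulled back to 2-forms on V via the orthogonal projections onto H and F, and set ω := ω_H + ω_F. Let δ : V → ℝ be a linear functional vanishing on F. Then the contraction ω ⌟ (δ ∧ ω_H) equals δ; explicitly, for every orthonormal basis (e₁,…,e₆) of V and every v ∈ V, Σ_{1 ≤ i < j ≤ 6} ω(e_i,e_j) · (δ ∧ ω_H)(e_i,e_j,v) = δ(v), where δ ∧ ω_H is the alternating 3-form (δ ∧ ω_H)(u,v,w) = δ(u)ω_H(v,w) − δ(v)ω_H(u,w) + δ(w)ω_H(u,v). -/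
open scoped InnerProductSpace
open Finset

/-!
Write `ω = ⟪J ·, ·⟫` and `ω_H = ⟪T ·, ·⟫` with the skew-adjoint maps `J = J_H ⊕ J_F` and
`T = J_H ⊕ 0`, and `δ = ⟪d, ·⟫`. Both factors of the summand are antisymmetric in `(e i, e j)`,
so the sum over `i < j` is half the full double sum. Expanding that double sum with
`∑ j, ⟪x, e j⟫ * ⟪e j, y⟫ = ⟪x, y⟫` gives `δ v * ∑ i, ⟪J (e i), T (e i)⟫ - 2 * ⟪J d, T v⟫`.
Here `∑ i, ⟪J (e i), T (e i)⟫ = ∑ i, ‖(e i).fst‖² = dim H = 4`, and `⟪J d, T v⟫ = δ v` because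
`J_H` is orthogonal and `δ` vanishes on `F`; hence the full sum is `2 δ v`.
-/

theorem Finset.two_mul_sum_sum_Ioi_of_symm {α R : Type*} [LinearOrder α] [Fintype α]
    [LocallyFiniteOrderTop α] [LocallyFiniteOrderBot α] [NonAssocSemiring R]
    (f : α → α → R) (hsymm : ∀ i j, f j i = f i j) (hdiag : ∀ i, f i i = 0) :
    2 * ∑ i, ∑ j ∈ Ioi i, f i j = ∑ i, ∑ j, f i j := by
  calc 2 * ∑ i, ∑ j ∈ Ioi i, f i j = ∑ i, ∑ j ∈ Ioi i, (f j i + f i j) := by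
        simp only [hsymm, ← two_mul, mul_sum]
    _ = ∑ i, ∑ j ∈ {i}ᶜ, f j i := sum_sum_Ioi_add_eq_sum_sum_off_diag f
    _ = ∑ i, ∑ j, f j i := by
        refine sum_congr rfl fun i _ => sum_subset (subset_univ _) fun j _ hj => ?_
        rw [notMem_compl.1 hj |> mem_singleton.1, hdiag]
    _ = ∑ i, ∑ j, f i j := sum_comm

def oneFormWedge {V : Type*} (α : V → ℝ) (β : V → V → ℝ) (u w x : V) : ℝ :=
  α u * β w x - α w * β u x + α x * β u w

theorem oneFormWedge_swap {V : Type*} {α : V → ℝ} {β : V → V → ℝ}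
    (hβ : ∀ u w, β w u = -β u w) (u w x : V) :
    oneFormWedge α β w u x = -oneFormWedge α β u w x := by
  simp only [oneFormWedge, hβ w u]
  ring

section Contraction

variable {V ι : Type*} [NormedAddCommGroup V] [InnerProductSpace ℝ V] [Fintype ι]

theorem OrthonormalBasis.sum_inner_mul_oneFormWedge (e : OrthonormalBasis ι ℝ V) {T : V → V}
    (hT : ∀ u w, ⟪T u, w⟫_ℝ = -⟪u, T w⟫_ℝ) (a b d v : V) :
    ∑ j, ⟪a, e j⟫_ℝ * oneFormWedge (fun x => ⟪d, x⟫_ℝ) (fun u w => ⟪T u, w⟫_ℝ) b (e j) v =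
      -(⟪d, b⟫_ℝ * ⟪a, T v⟫_ℝ) - ⟪T b, v⟫_ℝ * ⟪a, d⟫_ℝ + ⟪d, v⟫_ℝ * ⟪a, T b⟫_ℝ := by
  calc _ = ∑ j, (-(⟪d, b⟫_ℝ * (⟪a, e j⟫_ℝ * ⟪e j, T v⟫_ℝ))
        - ⟪T b, v⟫_ℝ * (⟪a, e j⟫_ℝ * ⟪e j, d⟫_ℝ)
        + ⟪d, v⟫_ℝ * (⟪a, e j⟫_ℝ * ⟪e j, T b⟫_ℝ)) := by
        refine sum_congr rfl fun j _ => ?_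
        simp only [oneFormWedge]
        rw [hT (e j) v, real_inner_comm d (e j), real_inner_comm (T b) (e j)]
        ring
    _ = _ := by
        simp only [sum_add_distrib, sum_sub_distrib, sum_neg_distrib, ← mul_sum,
          e.sum_inner_mul_inner]

theorem OrthonormalBasis.sum_sum_inner_mul_oneFormWedge (e : OrthonormalBasis ι ℝ V)
    {J T : V → V} (hJ : ∀ u w, ⟪J u, w⟫_ℝ = -⟪u, J w⟫_ℝ) (hT : ∀ u w, ⟪T u, w⟫_ℝ = -⟪u, T w⟫_ℝ)
    (d v : V) :
    ∑ i, ∑ j, ⟪J (e i), e j⟫_ℝ *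
        oneFormWedge (fun x => ⟪d, x⟫_ℝ) (fun u w => ⟪T u, w⟫_ℝ) (e i) (e j) v =
      ⟪d, v⟫_ℝ * ∑ i, ⟪J (e i), T (e i)⟫_ℝ - 2 * ⟪J d, T v⟫_ℝ := by
  have h₁ : ∑ i, ⟪d, e i⟫_ℝ * ⟪J (e i), T v⟫_ℝ = ⟪J d, T v⟫_ℝ := by
    calc _ = -∑ i, ⟪d, e i⟫_ℝ * ⟪e i, J (T v)⟫_ℝ := by
          simp only [hJ (e _) (T v), mul_neg, sum_neg_distrib]
      _ = ⟪J d, T v⟫_ℝ := by rw [e.sum_inner_mul_inner, hJ d]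
  have h₂ : ∑ i, ⟪T (e i), v⟫_ℝ * ⟪J (e i), d⟫_ℝ = ⟪J d, T v⟫_ℝ := by
    refine (sum_congr rfl fun i _ => ?_).trans (e.sum_inner_mul_inner (J d) (T v))
    rw [hT, hJ, real_inner_comm (J d)]
    ring
  simp only [e.sum_inner_mul_oneFormWedge hT, sum_add_distrib, sum_sub_distrib, sum_neg_distrib,
    h₁, h₂, ← mul_sum]
  ring

variable [LinearOrder ι] [LocallyFiniteOrderTop ι] [LocallyFiniteOrderBot ι]

noncomputable def contractTwoForm (e : OrthonormalBasis ι ℝ V) (θ : V → V → ℝ)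
    (η : V → V → V → ℝ) (v : V) : ℝ :=
  ∑ i, ∑ j ∈ Ioi i, θ (e i) (e j) * η (e i) (e j) v

theorem two_mul_contractTwoForm (e : OrthonormalBasis ι ℝ V) {θ : V → V → ℝ}
    {η : V → V → V → ℝ} (hθ : ∀ u w, θ w u = -θ u w) (hη : ∀ u w x, η w u x = -η u w x)
    (v : V) :
    2 * contractTwoForm e θ η v = ∑ i, ∑ j, θ (e i) (e j) * η (e i) (e j) v := by
  refine two_mul_sum_sum_Ioi_of_symm _ (fun i j => ?_) (fun i => ?_)
  · rw [hθ, hη]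
    ring
  · have hθii : θ (e i) (e i) = 0 := by linarith [hθ (e i) (e i)]
    rw [hθii, zero_mul]

theorem OrthonormalBasis.two_mul_contractTwoForm_inner_oneFormWedge (e : OrthonormalBasis ι ℝ V)
    {J T : V → V} (hJ : ∀ u w, ⟪J u, w⟫_ℝ = -⟪u, J w⟫_ℝ) (hT : ∀ u w, ⟪T u, w⟫_ℝ = -⟪u, T w⟫_ℝ)
    (d v : V) :
    2 * contractTwoForm e (fun u w => ⟪J u, w⟫_ℝ)
        (oneFormWedge (fun x => ⟪d, x⟫_ℝ) fun u w => ⟪T u, w⟫_ℝ) v =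
      ⟪d, v⟫_ℝ * ∑ i, ⟪J (e i), T (e i)⟫_ℝ - 2 * ⟪J d, T v⟫_ℝ := by
  rw [two_mul_contractTwoForm e (fun u w => by rw [hJ, real_inner_comm])
    (oneFormWedge_swap fun u w => by rw [hT, real_inner_comm]),
    e.sum_sum_inner_mul_oneFormWedge hJ hT]

end Contraction

section ProdL2

variable {𝕜 H F : Type*} [RCLike 𝕜] [NormedAddCommGroup H] [InnerProductSpace 𝕜 H]
  [NormedAddCommGroup F] [InnerProductSpace 𝕜 F]

theorem inner_apply_left_eq_neg_of_apply_apply_eq_neg {J : H → H} (hJ2 : ∀ h, J (J h) = -h)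
    (hJorth : ∀ h h', ⟪J h, J h'⟫_𝕜 = ⟪h, h'⟫_𝕜) (h h' : H) :
    ⟪J h, h'⟫_𝕜 = -⟪h, J h'⟫_𝕜 := by
  rw [← hJorth h (J h'), hJ2, inner_neg_right, neg_neg]

theorem WithLp.inner_withLpMap_prodMap_left_eq_neg {A : H →ₗ[𝕜] H} {B : F →ₗ[𝕜] F}
    (hA : ∀ h h', ⟪A h, h'⟫_𝕜 = -⟪h, A h'⟫_𝕜) (hB : ∀ f f', ⟪B f, f'⟫_𝕜 = -⟪f, B f'⟫_𝕜)
    (u w : WithLp 2 (H × F)) :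
    ⟪(A.prodMap B).withLpMap 2 u, w⟫_𝕜 = -⟪u, (A.prodMap B).withLpMap 2 w⟫_𝕜 := by
  simp only [LinearMap.coe_withLpMap, WithLp.map, LinearMap.prodMap_apply, ofLp_fst, ofLp_snd,
    prod_inner_apply, hA, hB]
  ring

theorem WithLp.inner_withLpMap_prodMap_prodMap_zero {A : H →ₗ[𝕜] H}
    (hA : ∀ h h', ⟪A h, A h'⟫_𝕜 = ⟪h, h'⟫_𝕜) (B : F →ₗ[𝕜] F) (u w : WithLp 2 (H × F)) :
    ⟪(A.prodMap B).withLpMap 2 u, (A.prodMap (0 : F →ₗ[𝕜] F)).withLpMap 2 w⟫_𝕜 =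
      ⟪u.fst, w.fst⟫_𝕜 := by
  simp [WithLp.prod_inner_apply, hA]

theorem OrthonormalBasis.sum_inner_fst_self [FiniteDimensional 𝕜 H] {ι : Type*} [Fintype ι]
    (e : OrthonormalBasis ι 𝕜 (WithLp 2 (H × F))) :
    ∑ i, ⟪(e i).fst, (e i).fst⟫_𝕜 = Module.finrank 𝕜 H := by
  let b := stdOrthonormalBasis 𝕜 H
  let u : Fin _ → WithLp 2 (H × F) := fun k => WithLp.toLp 2 (b k, 0)
  have hu : ∀ k x, ⟪u k, x⟫_𝕜 = ⟪b k, x.fst⟫_𝕜 := fun k x => by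
    simp [u, WithLp.prod_inner_apply]
  -- Parseval in `H` for each `(e i).fst`, then in `WithLp 2 (H × F)` for each unit vector `u k`.
  calc ∑ i, ⟪(e i).fst, (e i).fst⟫_𝕜
      = ∑ i, ∑ k, ⟪e i, u k⟫_𝕜 * ⟪u k, e i⟫_𝕜 := by
        refine sum_congr rfl fun i _ => ?_
        simp only [← inner_conj_symm (e i), hu, inner_conj_symm, b.sum_inner_mul_inner]
    _ = ∑ k, ⟪u k, u k⟫_𝕜 := by
        rw [sum_comm]
        simp only [mul_comm ⟪e _, _⟫_𝕜, e.sum_inner_mul_inner]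
    _ = Module.finrank 𝕜 H := by simp [u]

end ProdL2

theorem contraction_sum_hermitian_wedge_base_one_form_general
    {H F : Type*} [NormedAddCommGroup H] [InnerProductSpace ℝ H]
    [NormedAddCommGroup F] [InnerProductSpace ℝ F]
    (hH : Module.finrank ℝ H = 4)
    (JH : H →ₗ[ℝ] H)
    (hJH2 : ∀ h : H, JH (JH h) = -h)
    (hJHorth : ∀ h h' : H, ⟪JH h, JH h'⟫_ℝ = ⟪h, h'⟫_ℝ)
    (JF : F →ₗ[ℝ] F)
    (hJF2 : ∀ f : F, JF (JF f) = -f)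
    (hJForth : ∀ f f' : F, ⟪JF f, JF f'⟫_ℝ = ⟪f, f'⟫_ℝ)
    (ωH ωF ω : WithLp 2 (H × F) → WithLp 2 (H × F) → ℝ)
    (hωH : ∀ u v : WithLp 2 (H × F),
      ωH u v = ⟪JH (WithLp.equiv 2 (H × F) u).1, (WithLp.equiv 2 (H × F) v).1⟫_ℝ)
    (hωF : ∀ u v : WithLp 2 (H × F),
      ωF u v = ⟪JF (WithLp.equiv 2 (H × F) u).2, (WithLp.equiv 2 (H × F) v).2⟫_ℝ)
    (hω : ∀ u v : WithLp 2 (H × F), ω u v = ωH u v + ωF u v)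
    (δ : WithLp 2 (H × F) →ₗ[ℝ] ℝ)
    (hδ : ∀ f : F, δ ((WithLp.equiv 2 (H × F)).symm (0, f)) = 0)
    (e : OrthonormalBasis (Fin 6) ℝ (WithLp 2 (H × F)))
    (v : WithLp 2 (H × F)) :
    ∑ i : Fin 6, ∑ j ∈ Finset.Ioi i,
      ω (e i) (e j) *
        (δ (e i) * ωH (e j) v - δ (e j) * ωH (e i) v + δ v * ωH (e i) (e j)) =
      δ v := by
  have : FiniteDimensional ℝ H := .of_finrank_pos (by omega)
  have : FiniteDimensional ℝ (WithLp 2 (H × F)) := .of_basis e.toBasis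
  set J := (JH.prodMap JF).withLpMap 2
  set T := (JH.prodMap (0 : F →ₗ[ℝ] F)).withLpMap 2
  have hJHskew := inner_apply_left_eq_neg_of_apply_apply_eq_neg hJH2 hJHorth
  have hJskew : ∀ u w, ⟪J u, w⟫_ℝ = -⟪u, J w⟫_ℝ := WithLp.inner_withLpMap_prodMap_left_eq_neg
    hJHskew (inner_apply_left_eq_neg_of_apply_apply_eq_neg hJF2 hJForth)
  have hTskew : ∀ u w, ⟪T u, w⟫_ℝ = -⟪u, T w⟫_ℝ :=
    WithLp.inner_withLpMap_prodMap_left_eq_neg hJHskew (by simp)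
  obtain ⟨d, hδd⟩ : ∃ d, ∀ x, δ x = ⟪d, x⟫_ℝ :=
    ⟨(InnerProductSpace.toDual ℝ _).symm (LinearMap.toContinuousLinearMap δ), fun x => by simp⟩
  have hωJ : ω = fun u w => ⟪J u, w⟫_ℝ := by funext u w; simp [J, hω, hωH, hωF]
  have hωHT : ωH = fun u w => ⟪T u, w⟫_ℝ := by funext u w; simp [T, hωH]
  have hJT : ∀ u w, ⟪J u, T w⟫_ℝ = ⟪u.fst, w.fst⟫_ℝ :=
    WithLp.inner_withLpMap_prodMap_prodMap_zero hJHorth JF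
  have hdv : ⟪J d, T v⟫_ℝ = ⟪d, v⟫_ℝ := by
    have hd₂ : ⟪d.snd, v.snd⟫_ℝ = 0 := by simpa [hδd, WithLp.prod_inner_apply] using hδ v.snd
    simp only [hJT, WithLp.prod_inner_apply, WithLp.ofLp_fst, WithLp.ofLp_snd, hd₂, add_zero]
  have htrace : ∑ i, ⟪J (e i), T (e i)⟫_ℝ = 4 := by
    simp only [hJT, e.sum_inner_fst_self, hH, Nat.cast_ofNat]
  change contractTwoForm e ω (oneFormWedge δ ωH) v = δ v
  have h2 := e.two_mul_contractTwoForm_inner_oneFormWedge hJskew hTskew d v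
  rw [htrace, hdv, ← hωJ, ← hωHT, ← funext hδd] at h2
  linarith

/-- Let `H` and `F` be real inner product spaces with `dim H = 4` and
`dim F = 2`, and let `V = H ⊕ F` (realized as `WithLp 2 (H × F)`) with the direct-sum inner
product.  Let `J_H` and `J_F` be orthogonal complex structures on `H` and `F` with Hermitian
2-forms `ω_H` and `ω_F`, pulled back to 2-forms on `V` via the orthogonal projections, and
let `ω = ω_H + ω_F`.  Let `δ : V → ℝ` be a linear functional vanishing on `F`.  Then the
contraction `ω ⌟ (δ ∧ ω_H)` equals `δ`: for every orthonormal basis `(e₁,…,e₆)` of `V` and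
every `v ∈ V`, `∑_{i<j} ω (e i) (e j) * (δ ∧ ω_H)(e i, e j, v) = δ v`, where
`(δ ∧ ω_H)(u,v,w) = δ u * ω_H v w - δ v * ω_H u w + δ w * ω_H u v`. -/
theorem contraction_sum_hermitian_wedge_base_one_form
    {H F : Type*} [NormedAddCommGroup H] [InnerProductSpace ℝ H]
    [NormedAddCommGroup F] [InnerProductSpace ℝ F]
    (hH : Module.finrank ℝ H = 4) (hF : Module.finrank ℝ F = 2)
    (JH : H →ₗ[ℝ] H)
    (hJH2 : ∀ h : H, JH (JH h) = -h)
    (hJHorth : ∀ h h' : H, ⟪JH h, JH h'⟫_ℝ = ⟪h, h'⟫_ℝ)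
    (JF : F →ₗ[ℝ] F)
    (hJF2 : ∀ f : F, JF (JF f) = -f)
    (hJForth : ∀ f f' : F, ⟪JF f, JF f'⟫_ℝ = ⟪f, f'⟫_ℝ)
    (ωH ωF ω : WithLp 2 (H × F) → WithLp 2 (H × F) → ℝ)
    (hωH : ∀ u v : WithLp 2 (H × F),
      ωH u v = ⟪JH (WithLp.equiv 2 (H × F) u).1, (WithLp.equiv 2 (H × F) v).1⟫_ℝ)
    (hωF : ∀ u v : WithLp 2 (H × F),
      ωF u v = ⟪JF (WithLp.equiv 2 (H × F) u).2, (WithLp.equiv 2 (H × F) v).2⟫_ℝ)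
    (hω : ∀ u v : WithLp 2 (H × F), ω u v = ωH u v + ωF u v)
    (δ : WithLp 2 (H × F) →ₗ[ℝ] ℝ)
    (hδ : ∀ f : F, δ ((WithLp.equiv 2 (H × F)).symm (0, f)) = 0)
    (e : OrthonormalBasis (Fin 6) ℝ (WithLp 2 (H × F)))
    (v : WithLp 2 (H × F)) :
    ∑ i : Fin 6, ∑ j ∈ Finset.Ioi i,
      ω (e i) (e j) *
        (δ (e i) * ωH (e j) v - δ (e j) * ωH (e i) v + δ v * ωH (e i) (e j)) =
      δ v :=
  contraction_sum_hermitian_wedge_base_one_form_general hH JH hJH2 hJHorth JF hJF2 hJForth ωH ωF ω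
    hωH hωF hω δ hδ e v
end

section
/- Let H and F be real inner product spaces with dim H = 4 and dim F = 2, and let V = H ⊕ F with the direct-sum inner product. Let J_H and J_F be orthogonal complex structures on H and F, with Hermitian 2-forms ω_H and ω_F pulled back to V via the orthogonal projections, and set ω := ω_H + ω_F. Let η be a 2-form on H, pulled back to V, whose inner product with ω_H vanishes: Σ_{1 ≤ i < j ≤ 4} ω_H(f_i,f_j) η(f_i,f_j) = 0 for an orthonormal basis (f₁,…,f₄) of H. Let γ : V → ℝ be a linear functional vanishing on H. Then the contraction ω ⌟ (η ∧ γ) = 0, where η ∧ γ is the alternating 3-form (η ∧ γ)(u,v,w) = η(u,v)γ(w) − η(u,w)γ(v) + η(v,w)γ(u). -/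
/-!
With `ω u w = ⟪K u, w⟫` for the skew map `K = J_H ⊕ J_F`, the contraction is
`(½ ∑ᵢ η (eᵢ) (K eᵢ)) γ v - ∑ᵢ η (eᵢ) v · γ (K eᵢ)`. Both sums see only the `H`-components of
the `eᵢ`, so they can be recomputed in the basis `f` of `H`: the first becomes
`∑ₐ η₀ (fₐ) (J_H fₐ) = 2 ⟨ω_H, η⟩ = 0`, the second `∑ₐ η₀ (fₐ) v_H · γ (J_H fₐ, 0) = 0`.
-/

open scoped InnerProductSpace
open Finset

theorem Finset.sum_Ioi_add_swap {ι M : Type*} [Fintype ι] [LinearOrder ι] [LocallyFiniteOrderTop ι]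
    [LocallyFiniteOrderBot ι] [AddCommMonoid M] (c : ι → ι → M) (hc : ∀ i, c i i = 0) :
    ∑ i, ∑ j ∈ Ioi i, (c i j + c j i) = ∑ i, ∑ j, c i j := by
  have hswap : ∑ i, ∑ j ∈ Ioi i, c j i = ∑ j, ∑ i ∈ Iio j, c j i :=
    sum_comm' (fun _ _ => by simp [and_comm])
  have hsplit (i : ι) : ∑ j, c i j = ∑ j ∈ Iio i, c i j + ∑ j ∈ Ioi i, c i j := by
    classical
    rw [← sum_add_sum_compl (Iio i), show (Iio i)ᶜ = Ici i by ext; simp,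
      Ici_eq_cons_Ioi, sum_cons, hc, zero_add]
  simp_rw [sum_add_distrib, hswap, hsplit, sum_add_distrib, add_comm]

theorem OrthonormalBasis.sum_inner_mul_apply {ι E : Type*} [Fintype ι] [NormedAddCommGroup E]
    [InnerProductSpace ℝ E] (b : OrthonormalBasis ι ℝ E) (φ : E →ₗ[ℝ] ℝ) (x : E) :
    ∑ i, ⟪x, b i⟫_ℝ * φ (b i) = φ x := by
  conv_rhs => rw [← b.sum_repr' x]
  simp [real_inner_comm]

theorem real_inner_apply_swap_eq_neg {E : Type*} [NormedAddCommGroup E] [InnerProductSpace ℝ E]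
    (J : E →ₗ[ℝ] E) (hJ2 : ∀ x, J (J x) = -x) (hJorth : ∀ x y, ⟪J x, J y⟫_ℝ = ⟪x, y⟫_ℝ)
    (x y : E) : ⟪J y, x⟫_ℝ = -⟪J x, y⟫_ℝ := by
  rw [← hJorth, hJ2, inner_neg_left, real_inner_comm]

section Contraction

variable {ι V : Type*} [Fintype ι] [LinearOrder ι] [LocallyFiniteOrderTop ι]
  [LocallyFiniteOrderBot ι] [NormedAddCommGroup V] [InnerProductSpace ℝ V]
  (e : OrthonormalBasis ι ℝ V) {K : V →ₗ[ℝ] V}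

theorem OrthonormalBasis.two_mul_sum_Ioi_inner_mul_eq_sum
    (hK : ∀ u w, ⟪K w, u⟫_ℝ = -⟪K u, w⟫_ℝ) {β : V →ₗ[ℝ] V →ₗ[ℝ] ℝ} (hβ : β.IsAlt) :
    2 * ∑ i, ∑ j ∈ Ioi i, ⟪K (e i), e j⟫_ℝ * β (e i) (e j) = ∑ i, β (e i) (K (e i)) := by
  set c : ι → ι → ℝ := fun i j => ⟪K (e i), e j⟫_ℝ * β (e i) (e j)
  have hsymm (i j : ι) : c j i = c i j := by
    simp only [c]; rw [hK, ← hβ.neg, neg_mul_neg]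
  calc 2 * ∑ i, ∑ j ∈ Ioi i, c i j = ∑ i, ∑ j ∈ Ioi i, (c i j + c j i) := by
        simp_rw [hsymm, ← two_mul, mul_sum]
    _ = ∑ i, ∑ j, c i j := sum_Ioi_add_swap c fun i => by simp only [c, hβ (e i), mul_zero]
    _ = ∑ i, β (e i) (K (e i)) := by simp only [c, e.sum_inner_mul_apply]

theorem OrthonormalBasis.sum_Ioi_inner_mul_wedge_eq_sum
    (hK : ∀ u w, ⟪K w, u⟫_ℝ = -⟪K u, w⟫_ℝ) (φ ψ : V →ₗ[ℝ] ℝ) :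
    ∑ i, ∑ j ∈ Ioi i, ⟪K (e i), e j⟫_ℝ * (φ (e i) * ψ (e j) - φ (e j) * ψ (e i)) =
      ∑ i, φ (e i) * ψ (K (e i)) := by
  set c : ι → ι → ℝ := fun i j => φ (e i) * (⟪K (e i), e j⟫_ℝ * ψ (e j))
  have hpair (i j : ι) :
      ⟪K (e i), e j⟫_ℝ * (φ (e i) * ψ (e j) - φ (e j) * ψ (e i)) = c i j + c j i := by
    simp only [c]; rw [hK]; ring
  have hdiag (i : ι) : c i i = 0 := by
    simp only [c]; rw [show ⟪K (e i), e i⟫_ℝ = 0 by linarith [hK (e i) (e i)], zero_mul, mul_zero]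
  simp_rw [hpair, sum_Ioi_add_swap c hdiag, c, ← mul_sum, e.sum_inner_mul_apply]

theorem OrthonormalBasis.two_mul_sum_Ioi_inner_mul_wedge_eq
    (hK : ∀ u w, ⟪K w, u⟫_ℝ = -⟪K u, w⟫_ℝ) {β : V →ₗ[ℝ] V →ₗ[ℝ] ℝ} (hβ : β.IsAlt)
    (ψ : V →ₗ[ℝ] ℝ) (v : V) :
    2 * ∑ i, ∑ j ∈ Ioi i, ⟪K (e i), e j⟫_ℝ *
        (β (e i) (e j) * ψ v - β (e i) v * ψ (e j) + β (e j) v * ψ (e i)) =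
      (∑ i, β (e i) (K (e i))) * ψ v - 2 * ∑ i, β (e i) v * ψ (K (e i)) := by
  have hwedge := e.sum_Ioi_inner_mul_wedge_eq_sum hK (β.flip v) ψ
  simp only [LinearMap.flip_apply] at hwedge
  rw [← e.two_mul_sum_Ioi_inner_mul_eq_sum hK hβ, ← hwedge, mul_assoc, sum_mul, ← mul_sub,
    ← sum_sub_distrib]
  congr 1
  refine sum_congr rfl fun i _ => ?_
  rw [sum_mul, ← sum_sub_distrib]
  exact sum_congr rfl fun j _ => by ring

end Contraction

theorem real_inner_withLpMap_prodMap_swap_eq_neg {E F : Type*} [NormedAddCommGroup E]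
    [InnerProductSpace ℝ E] [NormedAddCommGroup F] [InnerProductSpace ℝ F]
    {A : E →ₗ[ℝ] E} {B : F →ₗ[ℝ] F} (hA : ∀ x y, ⟪A y, x⟫_ℝ = -⟪A x, y⟫_ℝ)
    (hB : ∀ x y, ⟪B y, x⟫_ℝ = -⟪B x, y⟫_ℝ) (u w : WithLp 2 (E × F)) :
    ⟪LinearMap.withLpMap 2 (A.prodMap B) w, u⟫_ℝ =
      -⟪LinearMap.withLpMap 2 (A.prodMap B) u, w⟫_ℝ := by
  change ⟪A w.fst, u.fst⟫_ℝ + ⟪B w.snd, u.snd⟫_ℝ = -(⟪A u.fst, w.fst⟫_ℝ + ⟪B u.snd, w.snd⟫_ℝ)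
  rw [hA, hB, neg_add]

theorem OrthonormalBasis.sum_apply_fst_apply {ι κ E F : Type*} [Fintype ι] [Fintype κ]
    [NormedAddCommGroup E] [InnerProductSpace ℝ E] [NormedAddCommGroup F] [InnerProductSpace ℝ F]
    (e : OrthonormalBasis ι ℝ (WithLp 2 (E × F))) (f : OrthonormalBasis κ ℝ E)
    (B : E →ₗ[ℝ] WithLp 2 (E × F) →ₗ[ℝ] ℝ) :
    ∑ i, B (e i).fst (e i) = ∑ a, B (f a) (WithLp.toLp 2 (f a, 0)) := by
  have hfst (i : ι) (a : κ) : ⟪(e i).fst, f a⟫_ℝ = ⟪WithLp.toLp 2 (f a, 0), e i⟫_ℝ := by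
    simp [real_inner_comm]
  calc ∑ i, B (e i).fst (e i) = ∑ i, ∑ a, ⟪(e i).fst, f a⟫_ℝ * B (f a) (e i) := by
        exact sum_congr rfl fun i _ => (f.sum_inner_mul_apply (B.flip (e i)) _).symm
    _ = ∑ a, ∑ i, ⟪WithLp.toLp 2 (f a, 0), e i⟫_ℝ * B (f a) (e i) := by
        simp_rw [hfst]; exact sum_comm
    _ = ∑ a, B (f a) (WithLp.toLp 2 (f a, 0)) := by simp_rw [e.sum_inner_mul_apply]

theorem contraction_sum_hermitian_wedge_primitive_two_form_fiber_one_form_general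
    {H F : Type*} [NormedAddCommGroup H] [InnerProductSpace ℝ H]
    [NormedAddCommGroup F] [InnerProductSpace ℝ F]
    (JH : H →ₗ[ℝ] H)
    (hJH2 : ∀ h : H, JH (JH h) = -h)
    (hJHorth : ∀ h h' : H, ⟪JH h, JH h'⟫_ℝ = ⟪h, h'⟫_ℝ)
    (JF : F →ₗ[ℝ] F)
    (hJF2 : ∀ f : F, JF (JF f) = -f)
    (hJForth : ∀ f f' : F, ⟪JF f, JF f'⟫_ℝ = ⟪f, f'⟫_ℝ)
    (ωH ωF ω : WithLp 2 (H × F) → WithLp 2 (H × F) → ℝ)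
    (hωH : ∀ u v : WithLp 2 (H × F),
      ωH u v = ⟪JH (WithLp.equiv 2 (H × F) u).1, (WithLp.equiv 2 (H × F) v).1⟫_ℝ)
    (hωF : ∀ u v : WithLp 2 (H × F),
      ωF u v = ⟪JF (WithLp.equiv 2 (H × F) u).2, (WithLp.equiv 2 (H × F) v).2⟫_ℝ)
    (hω : ∀ u v : WithLp 2 (H × F), ω u v = ωH u v + ωF u v)
    (η₀ : H →ₗ[ℝ] H →ₗ[ℝ] ℝ)
    (hη₀alt : ∀ h : H, η₀ h h = 0)
    (η : WithLp 2 (H × F) → WithLp 2 (H × F) → ℝ)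
    (hη : ∀ u v : WithLp 2 (H × F),
      η u v = η₀ (WithLp.equiv 2 (H × F) u).1 (WithLp.equiv 2 (H × F) v).1)
    (f : OrthonormalBasis (Fin 4) ℝ H)
    (hperp : ∑ i : Fin 4, ∑ j ∈ Finset.Ioi i, ⟪JH (f i), f j⟫_ℝ * η₀ (f i) (f j) = 0)
    (γ : WithLp 2 (H × F) →ₗ[ℝ] ℝ)
    (hγ : ∀ h : H, γ ((WithLp.equiv 2 (H × F)).symm (h, 0)) = 0)
    (e : OrthonormalBasis (Fin 6) ℝ (WithLp 2 (H × F)))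
    (v : WithLp 2 (H × F)) :
    ∑ i : Fin 6, ∑ j ∈ Finset.Ioi i,
      ω (e i) (e j) *
        (η (e i) (e j) * γ v - η (e i) v * γ (e j) + η (e j) v * γ (e i)) =
      0 := by
  set K := LinearMap.withLpMap 2 (JH.prodMap JF)
  set ηV := η₀.compl₁₂ (WithLp.fstₗ 2 ℝ H F) (WithLp.fstₗ 2 ℝ H F)
  have hωK (u w) : ω u w = ⟪K u, w⟫_ℝ := by rw [hω, hωH, hωF]; rfl
  have hηV (u w) : η u w = ηV u w := hη u w
  have hJHskew := real_inner_apply_swap_eq_neg JH hJH2 hJHorth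
  have hKskew := real_inner_withLpMap_prodMap_swap_eq_neg hJHskew
    (real_inner_apply_swap_eq_neg JF hJF2 hJForth)
  have hHsum : ∑ a, η₀ (f a) (JH (f a)) = 0 := by
    rw [← f.two_mul_sum_Ioi_inner_mul_eq_sum hJHskew hη₀alt, hperp, mul_zero]
  have htrace : ∑ i, ηV (e i) (K (e i)) = 0 :=
    (e.sum_apply_fst_apply f (η₀.compl₂ (JH ∘ₗ WithLp.fstₗ 2 ℝ H F))).trans hHsum
  have hfiber : ∑ i, ηV (e i) v * γ (K (e i)) = 0 := by
    refine (e.sum_apply_fst_apply f ((η₀.flip v.fst).smulRight (γ ∘ₗ K))).trans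
      (sum_eq_zero fun a _ => ?_)
    show η₀ (f a) v.fst * γ (WithLp.toLp 2 (JH (f a), JF 0)) = 0
    rw [map_zero]
    exact mul_eq_zero_of_right _ (hγ _)
  have hcontr :=
    e.two_mul_sum_Ioi_inner_mul_wedge_eq hKskew (β := ηV) (fun u => hη₀alt u.fst) γ v
  rw [htrace, hfiber, zero_mul, mul_zero, sub_zero] at hcontr
  simp_rw [hωK, hηV]
  linarith

/-- Let `H` and `F` be real inner product spaces with `dim H = 4` and
`dim F = 2`, and let `V = H ⊕ F` (realized as `WithLp 2 (H × F)`) with the direct-sum inner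
product.  Let `J_H` and `J_F` be orthogonal complex structures on `H` and `F` with Hermitian
2-forms `ω_H` and `ω_F`, pulled back to 2-forms on `V` via the orthogonal projections, and
let `ω = ω_H + ω_F`.  Let `η` be a 2-form on `H` (an alternating bilinear form `η₀`), pulled
back to `V`, whose inner product with `ω_H` vanishes:
`∑_{i<j} ω_H (f i) (f j) * η (f i) (f j) = 0` for an orthonormal basis `(f₁,…,f₄)` of `H`.
Let `γ : V → ℝ` be a linear functional vanishing on `H`.  Then the contraction
`ω ⌟ (η ∧ γ) = 0`: for every orthonormal basis `(e₁,…,e₆)` of `V` and every `v ∈ V`,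
`∑_{i<j} ω (e i) (e j) * (η ∧ γ)(e i, e j, v) = 0`, where
`(η ∧ γ)(u,v,w) = η u v * γ w - η u w * γ v + η v w * γ u`. -/
theorem contraction_sum_hermitian_wedge_primitive_two_form_fiber_one_form
    {H F : Type*} [NormedAddCommGroup H] [InnerProductSpace ℝ H]
    [NormedAddCommGroup F] [InnerProductSpace ℝ F]
    (hH : Module.finrank ℝ H = 4) (hF : Module.finrank ℝ F = 2)
    (JH : H →ₗ[ℝ] H)
    (hJH2 : ∀ h : H, JH (JH h) = -h)
    (hJHorth : ∀ h h' : H, ⟪JH h, JH h'⟫_ℝ = ⟪h, h'⟫_ℝ)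
    (JF : F →ₗ[ℝ] F)
    (hJF2 : ∀ f : F, JF (JF f) = -f)
    (hJForth : ∀ f f' : F, ⟪JF f, JF f'⟫_ℝ = ⟪f, f'⟫_ℝ)
    (ωH ωF ω : WithLp 2 (H × F) → WithLp 2 (H × F) → ℝ)
    (hωH : ∀ u v : WithLp 2 (H × F),
      ωH u v = ⟪JH (WithLp.equiv 2 (H × F) u).1, (WithLp.equiv 2 (H × F) v).1⟫_ℝ)
    (hωF : ∀ u v : WithLp 2 (H × F),
      ωF u v = ⟪JF (WithLp.equiv 2 (H × F) u).2, (WithLp.equiv 2 (H × F) v).2⟫_ℝ)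
    (hω : ∀ u v : WithLp 2 (H × F), ω u v = ωH u v + ωF u v)
    (η₀ : H →ₗ[ℝ] H →ₗ[ℝ] ℝ)
    (hη₀alt : ∀ h : H, η₀ h h = 0)
    (η : WithLp 2 (H × F) → WithLp 2 (H × F) → ℝ)
    (hη : ∀ u v : WithLp 2 (H × F),
      η u v = η₀ (WithLp.equiv 2 (H × F) u).1 (WithLp.equiv 2 (H × F) v).1)
    (f : OrthonormalBasis (Fin 4) ℝ H)
    (hperp : ∑ i : Fin 4, ∑ j ∈ Finset.Ioi i, ⟪JH (f i), f j⟫_ℝ * η₀ (f i) (f j) = 0)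
    (γ : WithLp 2 (H × F) →ₗ[ℝ] ℝ)
    (hγ : ∀ h : H, γ ((WithLp.equiv 2 (H × F)).symm (h, 0)) = 0)
    (e : OrthonormalBasis (Fin 6) ℝ (WithLp 2 (H × F)))
    (v : WithLp 2 (H × F)) :
    ∑ i : Fin 6, ∑ j ∈ Finset.Ioi i,
      ω (e i) (e j) *
        (η (e i) (e j) * γ v - η (e i) v * γ (e j) + η (e j) v * γ (e i)) =
      0 :=
  contraction_sum_hermitian_wedge_primitive_two_form_fiber_one_form_general JH hJH2 hJHorth JF hJF2
    hJForth ωH ωF ω hωH hωF hω η₀ hη₀alt η hη f hperp γ hγ e v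
end

section
/- Let V be a 4-dimensional real inner product space with orthogonal complex structure J and Hermitian 2-form ω(u,v) = ⟨Ju, v⟩. For a 2-form η on V, let η⁺ denote its J-invariant (i.e. (1,1)-) part, η⁺(u,v) := ½(η(u,v) + η(Ju,Jv)). Then η ∧ ω = 0 if and only if 2(η⁺ ∧ η⁺) = −‖η⁺‖² · (ω ∧ ω), where ‖η⁺‖² = Σ_{1 ≤ i < j ≤ 4} η⁺(e_i,e_j)² for an orthonormal basis (e₁,…,e₄) of V. (Equivalently: η ∧ ω vanishes if and only if the (1,1)-component of η is anti-selfdual.) -/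
open scoped InnerProductSpace
open Finset

private def IsForm2 {V : Type*} [AddCommGroup V] [Module ℝ V] (α : V → V → ℝ) : Prop :=
  (∀ x y z : V, α (x + y) z = α x z + α y z) ∧
  (∀ (c : ℝ) (x y : V), α (c • x) y = c * α x y) ∧
  (∀ x y z : V, α x (y + z) = α x y + α x z) ∧
  (∀ (c : ℝ) (x y : V), α x (c • y) = c * α x y) ∧
  (∀ x y : V, α y x = - α x y)

private def det4 (c₁ c₂ c₃ c₄ : Fin 4 → ℝ) : ℝ :=
  c₁ 0 * c₂ 1 * c₃ 2 * c₄ 3 - c₁ 0 * c₂ 1 * c₃ 3 * c₄ 2 - c₁ 0 * c₂ 2 * c₃ 1 * c₄ 3 + c₁ 0 * c₂ 2 * c₃ 3 * c₄ 1 + c₁ 0 * c₂ 3 * c₃ 1 * c₄ 2 - c₁ 0 * c₂ 3 * c₃ 2 * c₄ 1 - c₁ 1 * c₂ 0 * c₃ 2 * c₄ 3 + c₁ 1 * c₂ 0 * c₃ 3 * c₄ 2 + c₁ 1 * c₂ 2 * c₃ 0 * c₄ 3 - c₁ 1 * c₂ 2 * c₃ 3 * c₄ 0 - c₁ 1 *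 c₂ 3 * c₃ 0 * c₄ 2 + c₁ 1 * c₂ 3 * c₃ 2 * c₄ 0 + c₁ 2 * c₂ 0 * c₃ 1 * c₄ 3 - c₁ 2 * c₂ 0 * c₃ 3 * c₄ 1 - c₁ 2 * c₂ 1 * c₃ 0 * c₄ 3 + c₁ 2 * c₂ 1 * c₃ 3 * c₄ 0 + c₁ 2 * c₂ 3 * c₃ 0 * c₄ 1 - c₁ 2 * c₂ 3 * c₃ 1 * c₄ 0 - c₁ 3 * c₂ 0 * c₃ 1 * c₄ 2 + c₁ 3 * c₂ 0 * c₃ 2 * c₄ 1 + c₁ 3 * c₂ 1 * c₃ 0 * c₄ 2 - c₁ 3 * c₂ 1 * c₃ 2 * c₄ 0 - c₁ 3 * c₂ 2 * c₃ 0 * c₄ 1 + c₁ 3 * c₂ 2 * c₃ 1 * c₄ 0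

private lemma bilin_expand {V : Type*} [AddCommGroup V] [Module ℝ V]
    (α : V → V → ℝ) (hα : IsForm2 α) (f₀ f₁ f₂ f₃ x y : V) (cx cy : Fin 4 → ℝ)
    (hx : x = cx 0 • f₀ + cx 1 • f₁ + cx 2 • f₂ + cx 3 • f₃)
    (hy : y = cy 0 • f₀ + cy 1 • f₁ + cy 2 • f₂ + cy 3 • f₃) :
    α x y = (cx 0 * cy 1 - cx 1 * cy 0) * α f₀ f₁ + (cx 0 * cy 2 - cx 2 * cy 0) * α f₀ f₂
      + (cx 0 * cy 3 - cx 3 * cy 0) * α f₀ f₃ + (cx 1 * cy 2 - cx 2 * cy 1) * α f₁ f₂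
      + (cx 1 * cy 3 - cx 3 * cy 1) * α f₁ f₃ + (cx 2 * cy 3 - cx 3 * cy 2) * α f₂ f₃ := by
  obtain ⟨h1, h2, h3, h4, h5⟩ := hα
  have hd : ∀ v : V, α v v = 0 := fun v => by have := h5 v v; linarith
  subst hx hy
  simp only [h1, h2, h3, h4, hd, h5 f₀ f₁, h5 f₀ f₂, h5 f₀ f₃, h5 f₁ f₂, h5 f₁ f₃, h5 f₂ f₃]
  ring

private lemma wedge_red {V : Type*} [AddCommGroup V] [Module ℝ V]
    (α β : V → V → ℝ) (hα : IsForm2 α) (hβ : IsForm2 β)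
    (f₀ f₁ f₂ f₃ v₁ v₂ v₃ v₄ : V) (c₁ c₂ c₃ c₄ : Fin 4 → ℝ)
    (h₁ : v₁ = c₁ 0 • f₀ + c₁ 1 • f₁ + c₁ 2 • f₂ + c₁ 3 • f₃)
    (h₂ : v₂ = c₂ 0 • f₀ + c₂ 1 • f₁ + c₂ 2 • f₂ + c₂ 3 • f₃)
    (h₃ : v₃ = c₃ 0 • f₀ + c₃ 1 • f₁ + c₃ 2 • f₂ + c₃ 3 • f₃)
    (h₄ : v₄ = c₄ 0 • f₀ + c₄ 1 • f₁ + c₄ 2 • f₂ + c₄ 3 • f₃) :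
    α v₁ v₂ * β v₃ v₄ - α v₁ v₃ * β v₂ v₄ + α v₁ v₄ * β v₂ v₃ +
      α v₂ v₃ * β v₁ v₄ - α v₂ v₄ * β v₁ v₃ + α v₃ v₄ * β v₁ v₂ =
    det4 c₁ c₂ c₃ c₄ *
      (α f₀ f₁ * β f₂ f₃ - α f₀ f₂ * β f₁ f₃ + α f₀ f₃ * β f₁ f₂ +
        α f₁ f₂ * β f₀ f₃ - α f₁ f₃ * β f₀ f₂ + α f₂ f₃ * β f₀ f₁) := by
  rw [bilin_expand α hα f₀ f₁ f₂ f₃ v₁ v₂ c₁ c₂ h₁ h₂,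
      bilin_expand α hα f₀ f₁ f₂ f₃ v₁ v₃ c₁ c₃ h₁ h₃,
      bilin_expand α hα f₀ f₁ f₂ f₃ v₁ v₄ c₁ c₄ h₁ h₄,
      bilin_expand α hα f₀ f₁ f₂ f₃ v₂ v₃ c₂ c₃ h₂ h₃,
      bilin_expand α hα f₀ f₁ f₂ f₃ v₂ v₄ c₂ c₄ h₂ h₄,
      bilin_expand α hα f₀ f₁ f₂ f₃ v₃ v₄ c₃ c₄ h₃ h₄,
      bilin_expand β hβ f₀ f₁ f₂ f₃ v₁ v₂ c₁ c₂ h₁ h₂,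
      bilin_expand β hβ f₀ f₁ f₂ f₃ v₁ v₃ c₁ c₃ h₁ h₃,
      bilin_expand β hβ f₀ f₁ f₂ f₃ v₁ v₄ c₁ c₄ h₁ h₄,
      bilin_expand β hβ f₀ f₁ f₂ f₃ v₂ v₃ c₂ c₃ h₂ h₃,
      bilin_expand β hβ f₀ f₁ f₂ f₃ v₂ v₄ c₂ c₄ h₂ h₄,
      bilin_expand β hβ f₀ f₁ f₂ f₃ v₃ v₄ c₃ c₄ h₃ h₄,
      det4]
  ring

set_option maxHeartbeats 4000000 in
/-- Let `V` be a 4-dimensional real inner product space with orthogonal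
complex structure `J` and Hermitian 2-form `ω u v = ⟪J u, v⟫`.  For a 2-form `η` on `V`
(an alternating bilinear form), let `η⁺` be its `J`-invariant (i.e. `(1,1)`-) part,
`η⁺ u v = (η u v + η (J u) (J v)) / 2`.  Then `η ∧ ω = 0` if and only if
`2 (η⁺ ∧ η⁺) = -‖η⁺‖² (ω ∧ ω)`, where `‖η⁺‖² = ∑_{i<j} (η⁺ (e i) (e j))²` for an
orthonormal basis `(e₁,…,e₄)` of `V`, and where `w` denotes the wedge product of two
2-forms, `(α ∧ β)(v₁,v₂,v₃,v₄) = α v₁ v₂ * β v₃ v₄ - α v₁ v₃ * β v₂ v₄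
 + α v₁ v₄ * β v₂ v₃ + α v₂ v₃ * β v₁ v₄ - α v₂ v₄ * β v₁ v₃ + α v₃ v₄ * β v₁ v₂`.
(Equivalently: `η ∧ ω` vanishes iff the `(1,1)`-component of `η` is anti-selfdual.) -/
theorem wedge_hermitian_eq_zero_iff_one_one_part_anti_selfdual
    {V : Type*} [NormedAddCommGroup V] [InnerProductSpace ℝ V]
    (hdim : Module.finrank ℝ V = 4)
    (J : V →ₗ[ℝ] V)
    (hJ2 : ∀ v : V, J (J v) = -v)
    (hJorth : ∀ u v : V, ⟪J u, J v⟫_ℝ = ⟪u, v⟫_ℝ)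
    (ω : V → V → ℝ)
    (hω : ∀ u v : V, ω u v = ⟪J u, v⟫_ℝ)
    (η : V →ₗ[ℝ] V →ₗ[ℝ] ℝ)
    (hηalt : ∀ v : V, η v v = 0)
    (ηp : V → V → ℝ)
    (hηp : ∀ u v : V, ηp u v = (η u v + η (J u) (J v)) / 2)
    (w : (V → V → ℝ) → (V → V → ℝ) → V → V → V → V → ℝ)
    (hw : ∀ (α β : V → V → ℝ) (v₁ v₂ v₃ v₄ : V),
      w α β v₁ v₂ v₃ v₄ =
        α v₁ v₂ * β v₃ v₄ - α v₁ v₃ * β v₂ v₄ + α v₁ v₄ * β v₂ v₃ +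
          α v₂ v₃ * β v₁ v₄ - α v₂ v₄ * β v₁ v₃ + α v₃ v₄ * β v₁ v₂)
    (e : OrthonormalBasis (Fin 4) ℝ V) :
    (∀ v₁ v₂ v₃ v₄ : V, w (fun u v => η u v) ω v₁ v₂ v₃ v₄ = 0) ↔
      (∀ v₁ v₂ v₃ v₄ : V,
        2 * w ηp ηp v₁ v₂ v₃ v₄ =
          -(∑ i : Fin 4, ∑ j ∈ Finset.Ioi i, (ηp (e i) (e j)) ^ 2) *
            w ω ω v₁ v₂ v₃ v₄) := by
  -- skew-symmetry facts
  have hηsk : ∀ x y : V, η y x = -η x y := by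
    intro x y
    have h := hηalt (x + y)
    simp only [map_add, LinearMap.add_apply, hηalt x, hηalt y] at h
    linarith
  have hωsk : ∀ x y : V, ω y x = -ω x y := by
    intro x y
    have h := hJorth (J y) x
    rw [hJ2 y] at h
    rw [hω y x, hω x y, ← h, inner_neg_left, real_inner_comm y (J x)]
  have hωd : ∀ x : V, ω x x = 0 := fun x => by have := hωsk x x; linarith
  -- bilinearity
  have hηf : IsForm2 (fun u v => η u v) := by
    refine ⟨fun x y z => by simp, fun c x y => by simp, fun x y z => by simp,
      fun c x y => by simp, fun x y => hηsk x y⟩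
  have hωf : IsForm2 ω := by
    refine ⟨fun x y z => by simp [hω, inner_add_left], fun c x y => by simp [hω, real_inner_smul_left],
      fun x y z => by simp [hω, inner_add_right], fun c x y => by simp [hω, real_inner_smul_right],
      hωsk⟩
  have hηpf : IsForm2 ηp := by
    refine ⟨fun x y z => by simp only [hηp, map_add, LinearMap.add_apply]; ring,
      fun c x y => by simp only [hηp, map_smul, LinearMap.smul_apply, smul_eq_mul]; ring,
      fun x y z => by simp only [hηp, map_add, LinearMap.add_apply]; ring,
      fun c x y => by simp only [hηp, map_smul, LinearMap.smul_apply, smul_eq_mul]; ring,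
      fun x y => by rw [hηp, hηp, hηsk x y, hηsk (J x) (J y)]; ring⟩
  -- coordinates
  have hrep : ∀ v : V, v = ⟪e 0, v⟫_ℝ • e 0 + ⟪e 1, v⟫_ℝ • e 1 + ⟪e 2, v⟫_ℝ • e 2 + ⟪e 3, v⟫_ℝ • e 3 := by
    intro v
    have h := e.sum_repr v
    rw [Fin.sum_univ_four] at h
    simp only [e.repr_apply_apply] at h
    exact h.symm
  have hred : ∀ v₁ v₂ v₃ v₄ : V, ∃ D : ℝ, ∀ α β : V → V → ℝ, IsForm2 α → IsForm2 β →
      w α β v₁ v₂ v₃ v₄ = D * w α β (e 0) (e 1) (e 2) (e 3) := by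
    intro v₁ v₂ v₃ v₄
    refine ⟨det4 (fun k => ⟪e k, v₁⟫_ℝ) (fun k => ⟪e k, v₂⟫_ℝ) (fun k => ⟪e k, v₃⟫_ℝ)
      (fun k => ⟪e k, v₄⟫_ℝ), ?_⟩
    intro α β hα hβ
    rw [hw, hw]
    exact wedge_red α β hα hβ (e 0) (e 1) (e 2) (e 3) v₁ v₂ v₃ v₄
      (fun k => ⟪e k, v₁⟫_ℝ) (fun k => ⟪e k, v₂⟫_ℝ) (fun k => ⟪e k, v₃⟫_ℝ) (fun k => ⟪e k, v₄⟫_ℝ)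
      (hrep v₁) (hrep v₂) (hrep v₃) (hrep v₄)
  -- J on basis vectors
  have h2 : ∀ (u : V) (k : Fin 4), ⟪e k, J u⟫_ℝ = ω u (e k) := by
    intro u k
    rw [hω]
    exact real_inner_comm _ _
  have hJe : ∀ i : Fin 4, J (e i) =
      ω (e i) (e 0) • e 0 + ω (e i) (e 1) • e 1 + ω (e i) (e 2) • e 2 + ω (e i) (e 3) • e 3 := by
    intro i
    have h := e.sum_repr (J (e i))
    rw [Fin.sum_univ_four] at h
    simp only [e.repr_apply_apply, h2] at h
    exact h.symm
  -- canonical skew instances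
  have hsa10 : η (e 1) (e 0) = -η (e 0) (e 1) := hηsk _ _
  have hsa20 : η (e 2) (e 0) = -η (e 0) (e 2) := hηsk _ _
  have hsa30 : η (e 3) (e 0) = -η (e 0) (e 3) := hηsk _ _
  have hsa21 : η (e 2) (e 1) = -η (e 1) (e 2) := hηsk _ _
  have hsa31 : η (e 3) (e 1) = -η (e 1) (e 3) := hηsk _ _
  have hsa32 : η (e 3) (e 2) = -η (e 2) (e 3) := hηsk _ _
  have hda0 : η (e 0) (e 0) = 0 := hηalt _
  have hda1 : η (e 1) (e 1) = 0 := hηalt _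
  have hda2 : η (e 2) (e 2) = 0 := hηalt _
  have hda3 : η (e 3) (e 3) = 0 := hηalt _
  have hsw10 : ω (e 1) (e 0) = -ω (e 0) (e 1) := hωsk _ _
  have hsw20 : ω (e 2) (e 0) = -ω (e 0) (e 2) := hωsk _ _
  have hsw30 : ω (e 3) (e 0) = -ω (e 0) (e 3) := hωsk _ _
  have hsw21 : ω (e 2) (e 1) = -ω (e 1) (e 2) := hωsk _ _
  have hsw31 : ω (e 3) (e 1) = -ω (e 1) (e 3) := hωsk _ _
  have hsw32 : ω (e 3) (e 2) = -ω (e 2) (e 3) := hωsk _ _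
  have hdw0 : ω (e 0) (e 0) = 0 := hωd _
  have hdw1 : ω (e 1) (e 1) = 0 := hωd _
  have hdw2 : ω (e 2) (e 2) = 0 := hωd _
  have hdw3 : ω (e 3) (e 3) = 0 := hωd _
  -- Gram constraints
  have hone : ∀ i : Fin 4, ⟪e i, e i⟫_ℝ = 1 := fun i => by
    simpa using orthonormal_iff_ite.mp e.orthonormal i i
  have hzero : ∀ i j : Fin 4, i ≠ j → ⟪e i, e j⟫_ℝ = 0 := fun i j h => e.orthonormal.2 h
  have gram : ∀ i j : Fin 4,
      ω (e i) (e 0) * ω (e j) (e 0) + ω (e i) (e 1) * ω (e j) (e 1) +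
        ω (e i) (e 2) * ω (e j) (e 2) + ω (e i) (e 3) * ω (e j) (e 3) = ⟪e i, e j⟫_ℝ := by
    intro i j
    have h := e.sum_inner_mul_inner (J (e i)) (J (e j))
    rw [Fin.sum_univ_four, hJorth] at h
    simp only [h2, ← hω] at h
    exact h
  have g0 : ω (e 0) (e 1) ^ 2 + ω (e 0) (e 2) ^ 2 + ω (e 0) (e 3) ^ 2 = 1 := by
    have h := gram 0 0
    rw [hone 0] at h
    simp only [hdw0] at h
    linear_combination h
  have g1 : ω (e 0) (e 1) ^ 2 + ω (e 1) (e 2) ^ 2 + ω (e 1) (e 3) ^ 2 = 1 := by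
    have h := gram 1 1
    rw [hone 1] at h
    simp only [hdw1, hsw10] at h
    linear_combination h
  have g2 : ω (e 0) (e 2) ^ 2 + ω (e 1) (e 2) ^ 2 + ω (e 2) (e 3) ^ 2 = 1 := by
    have h := gram 2 2
    rw [hone 2] at h
    simp only [hdw2, hsw20, hsw21] at h
    linear_combination h
  have g3 : ω (e 0) (e 3) ^ 2 + ω (e 1) (e 3) ^ 2 + ω (e 2) (e 3) ^ 2 = 1 := by
    have h := gram 3 3
    rw [hone 3] at h
    simp only [hdw3, hsw30, hsw31, hsw32] at h
    linear_combination h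
  have g01 : ω (e 0) (e 2) * ω (e 1) (e 2) + ω (e 0) (e 3) * ω (e 1) (e 3) = 0 := by
    have h := gram 0 1
    rw [hzero 0 1 (by decide)] at h
    simp only [hdw0, hdw1, hsw10] at h
    linear_combination h
  have g02 : ω (e 0) (e 3) * ω (e 2) (e 3) - ω (e 0) (e 1) * ω (e 1) (e 2) = 0 := by
    have h := gram 0 2
    rw [hzero 0 2 (by decide)] at h
    simp only [hdw0, hdw2, hsw20, hsw21] at h
    linear_combination h
  have g03 : ω (e 0) (e 1) * ω (e 1) (e 3) + ω (e 0) (e 2) * ω (e 2) (e 3) = 0 := by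
    have h := gram 0 3
    rw [hzero 0 3 (by decide)] at h
    simp only [hdw0, hdw3, hsw30, hsw31, hsw32] at h
    linear_combination -h
  have g12 : ω (e 0) (e 1) * ω (e 0) (e 2) + ω (e 1) (e 3) * ω (e 2) (e 3) = 0 := by
    have h := gram 1 2
    rw [hzero 1 2 (by decide)] at h
    simp only [hdw1, hdw2, hsw10, hsw20, hsw21] at h
    linear_combination h
  have g13 : ω (e 0) (e 1) * ω (e 0) (e 3) - ω (e 1) (e 2) * ω (e 2) (e 3) = 0 := by
    have h := gram 1 3
    rw [hzero 1 3 (by decide)] at h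
    simp only [hdw1, hdw3, hsw10, hsw30, hsw31, hsw32] at h
    linear_combination h
  have g23 : ω (e 0) (e 2) * ω (e 0) (e 3) + ω (e 1) (e 2) * ω (e 1) (e 3) = 0 := by
    have h := gram 2 3
    rw [hzero 2 3 (by decide)] at h
    simp only [hdw2, hdw3, hsw20, hsw21, hsw30, hsw31, hsw32] at h
    linear_combination h
  -- the products of selfdual and anti-selfdual components of ω vanish
  have P1 : (ω (e 0) (e 1) + ω (e 2) (e 3)) * (ω (e 0) (e 1) - ω (e 2) (e 3)) = 0 := by
    linear_combination ((1:ℝ)/2) * g0 + ((1:ℝ)/2) * g1 - ((1:ℝ)/2) * g2 - ((1:ℝ)/2) * g3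
  have P2 : (ω (e 0) (e 1) + ω (e 2) (e 3)) * (ω (e 0) (e 2) + ω (e 1) (e 3)) = 0 := by
    linear_combination g12 + g03
  have P3 : (ω (e 0) (e 1) + ω (e 2) (e 3)) * (ω (e 0) (e 3) - ω (e 1) (e 2)) = 0 := by
    linear_combination g13 + g02
  have P4 : (ω (e 0) (e 2) - ω (e 1) (e 3)) * (ω (e 0) (e 1) - ω (e 2) (e 3)) = 0 := by
    linear_combination g12 - g03
  have P5 : (ω (e 0) (e 2) - ω (e 1) (e 3)) * (ω (e 0) (e 2) + ω (e 1) (e 3)) = 0 := by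
    linear_combination ((1:ℝ)/2) * g0 - ((1:ℝ)/2) * g1 + ((1:ℝ)/2) * g2 - ((1:ℝ)/2) * g3
  have P6 : (ω (e 0) (e 2) - ω (e 1) (e 3)) * (ω (e 0) (e 3) - ω (e 1) (e 2)) = 0 := by
    linear_combination g23 - g01
  have P7 : (ω (e 0) (e 3) + ω (e 1) (e 2)) * (ω (e 0) (e 1) - ω (e 2) (e 3)) = 0 := by
    linear_combination g13 - g02
  have P8 : (ω (e 0) (e 3) + ω (e 1) (e 2)) * (ω (e 0) (e 2) + ω (e 1) (e 3)) = 0 := by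
    linear_combination g23 + g01
  have P9 : (ω (e 0) (e 3) + ω (e 1) (e 2)) * (ω (e 0) (e 3) - ω (e 1) (e 2)) = 0 := by
    linear_combination ((1:ℝ)/2) * g0 - ((1:ℝ)/2) * g1 - ((1:ℝ)/2) * g2 + ((1:ℝ)/2) * g3
  have hcase : (ω (e 2) (e 3) = ω (e 0) (e 1) ∧ ω (e 1) (e 3) = -ω (e 0) (e 2) ∧ ω (e 1) (e 2) = ω (e 0) (e 3)) ∨
      (ω (e 2) (e 3) = -ω (e 0) (e 1) ∧ ω (e 1) (e 3) = ω (e 0) (e 2) ∧ ω (e 1) (e 2) = -ω (e 0) (e 3)) := by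
    by_cases h1 : ω (e 0) (e 1) - ω (e 2) (e 3) = 0
    · by_cases h2 : ω (e 0) (e 2) + ω (e 1) (e 3) = 0
      · by_cases h3 : ω (e 0) (e 3) - ω (e 1) (e 2) = 0
        · left; exact ⟨by linarith, by linarith, by linarith⟩
        · right
          have e1 : ω (e 0) (e 1) + ω (e 2) (e 3) = 0 := (mul_eq_zero.mp P3).resolve_right h3
          have e2 : ω (e 0) (e 2) - ω (e 1) (e 3) = 0 := (mul_eq_zero.mp P6).resolve_right h3
          have e3 : ω (e 0) (e 3) + ω (e 1) (e 2) = 0 := (mul_eq_zero.mp P9).resolve_right h3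
          exact ⟨by linarith, by linarith, by linarith⟩
      · right
        have e1 : ω (e 0) (e 1) + ω (e 2) (e 3) = 0 := (mul_eq_zero.mp P2).resolve_right h2
        have e2 : ω (e 0) (e 2) - ω (e 1) (e 3) = 0 := (mul_eq_zero.mp P5).resolve_right h2
        have e3 : ω (e 0) (e 3) + ω (e 1) (e 2) = 0 := (mul_eq_zero.mp P8).resolve_right h2
        exact ⟨by linarith, by linarith, by linarith⟩
    · right
      have e1 : ω (e 0) (e 1) + ω (e 2) (e 3) = 0 := (mul_eq_zero.mp P1).resolve_right h1
      have e2 : ω (e 0) (e 2) - ω (e 1) (e 3) = 0 := (mul_eq_zero.mp P4).resolve_right h1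
      have e3 : ω (e 0) (e 3) + ω (e 1) (e 2) = 0 := (mul_eq_zero.mp P7).resolve_right h1
      exact ⟨by linarith, by linarith, by linarith⟩
  -- the values of ηp on the basis
  have hb01 : ηp (e 0) (e 1) = (((-1:ℝ)/2) * (η (e 2) (e 3)) * (ω (e 0) (e 3)) * (ω (e 1) (e 2)) + ((1:ℝ)/2) * (η (e 2) (e 3)) * (ω (e 0) (e 2)) * (ω (e 1) (e 3)) + ((1:ℝ)/2) * (η (e 1) (e 3)) * (ω (e 0) (e 1)) * (ω (e 1) (e 3)) + ((1:ℝ)/2) * (η (e 1) (e 2)) * (ω (e 0) (e 1)) * (ω (e 1) (e 2)) + ((1:ℝ)/2) * (η (e 0) (e 3)) * (ω (e 0) (e 1)) * (ω (e 0) (e 3)) + ((1:ℝ)/2) * (η (e 0) (e 2)) * (ω (e 0) (e 1)) * (ω (e 0) (e 2)) + ((1:ℝ)/2) * (η (e 0) (e 1)) + ((1:ℝ)/2) * (η (e 0) (e 1)) * (ω (e 0) (e 1)) * (ω (e 0) (e 1))) := by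
    rw [hηp, hJe 0, hJe 1]
    simp only [map_add, map_smul, LinearMap.add_apply, LinearMap.smul_apply, smul_eq_mul]
    simp only [hsa10, hsa20, hsa30, hsa21, hsa31, hsa32, hda0, hda1, hda2, hda3,
      hsw10, hsw20, hsw30, hsw21, hsw31, hsw32, hdw0, hdw1, hdw2, hdw3]
    ring
  have hb02 : ηp (e 0) (e 2) = (((1:ℝ)/2) * (η (e 2) (e 3)) * (ω (e 0) (e 2)) * (ω (e 2) (e 3)) + ((1:ℝ)/2) * (η (e 1) (e 3)) * (ω (e 0) (e 3)) * (ω (e 1) (e 2)) + ((1:ℝ)/2) * (η (e 1) (e 3)) * (ω (e 0) (e 1)) * (ω (e 2) (e 3)) + ((1:ℝ)/2) * (η (e 1) (e 2)) * (ω (e 0) (e 2)) * (ω (e 1) (e 2)) + ((1:ℝ)/2) * (η (e 0) (e 3)) * (ω (e 0) (e 2)) * (ω (e 0) (e 3)) + ((1:ℝ)/2) * (η (e 0) (e 2)) + ((1:ℝ)/2) * (η (e 0) (e 2)) * (ω (e 0) (e 2)) * (ω (e 0) (e 2)) + ((1:ℝ)/2) * (η (e 0) (e 1)) * (ω (e 0)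 (e 1)) * (ω (e 0) (e 2))) := by
    rw [hηp, hJe 0, hJe 2]
    simp only [map_add, map_smul, LinearMap.add_apply, LinearMap.smul_apply, smul_eq_mul]
    simp only [hsa10, hsa20, hsa30, hsa21, hsa31, hsa32, hda0, hda1, hda2, hda3,
      hsw10, hsw20, hsw30, hsw21, hsw31, hsw32, hdw0, hdw1, hdw2, hdw3]
    ring
  have hb03 : ηp (e 0) (e 3) = (((1:ℝ)/2) * (η (e 2) (e 3)) * (ω (e 0) (e 3)) * (ω (e 2) (e 3)) + ((1:ℝ)/2) * (η (e 1) (e 3)) * (ω (e 0) (e 3)) * (ω (e 1) (e 3)) + ((1:ℝ)/2) * (η (e 1) (e 2)) * (ω (e 0) (e 2)) * (ω (e 1) (e 3)) + ((-1:ℝ)/2) * (η (e 1) (e 2)) * (ω (e 0) (e 1)) * (ω (e 2) (e 3)) + ((1:ℝ)/2) * (η (e 0) (e 3)) + ((1:ℝ)/2) * (η (e 0) (e 3)) * (ω (e 0) (e 3)) * (ω (e 0) (e 3)) + ((1:ℝ)/2) * (η (e 0) (e 2)) * (ω (e 0) (e 2)) * (ω (e 0) (e 3)) + ((1:ℝ)/2)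 * (η (e 0) (e 1)) * (ω (e 0) (e 1)) * (ω (e 0) (e 3))) := by
    rw [hηp, hJe 0, hJe 3]
    simp only [map_add, map_smul, LinearMap.add_apply, LinearMap.smul_apply, smul_eq_mul]
    simp only [hsa10, hsa20, hsa30, hsa21, hsa31, hsa32, hda0, hda1, hda2, hda3,
      hsw10, hsw20, hsw30, hsw21, hsw31, hsw32, hdw0, hdw1, hdw2, hdw3]
    ring
  have hb12 : ηp (e 1) (e 2) = (((1:ℝ)/2) * (η (e 2) (e 3)) * (ω (e 1) (e 2)) * (ω (e 2) (e 3)) + ((1:ℝ)/2) * (η (e 1) (e 3)) * (ω (e 1) (e 2)) * (ω (e 1) (e 3)) + ((1:ℝ)/2) * (η (e 1) (e 2)) + ((1:ℝ)/2) * (η (e 1) (e 2)) * (ω (e 1) (e 2)) * (ω (e 1) (e 2)) + ((1:ℝ)/2) * (η (e 0) (e 3)) * (ω (e 0) (e 2)) * (ω (e 1) (e 3)) + ((-1:ℝ)/2) * (η (e 0) (e 3)) * (ω (e 0) (e 1)) * (ω (e 2) (e 3)) + ((1:ℝ)/2) * (η (e 0) (e 2)) * (ω (e 0) (e 2)) *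 (ω (e 1) (e 2)) + ((1:ℝ)/2) * (η (e 0) (e 1)) * (ω (e 0) (e 1)) * (ω (e 1) (e 2))) := by
    rw [hηp, hJe 1, hJe 2]
    simp only [map_add, map_smul, LinearMap.add_apply, LinearMap.smul_apply, smul_eq_mul]
    simp only [hsa10, hsa20, hsa30, hsa21, hsa31, hsa32, hda0, hda1, hda2, hda3,
      hsw10, hsw20, hsw30, hsw21, hsw31, hsw32, hdw0, hdw1, hdw2, hdw3]
    ring
  have hb13 : ηp (e 1) (e 3) = (((1:ℝ)/2) * (η (e 2) (e 3)) * (ω (e 1) (e 3)) * (ω (e 2) (e 3)) + ((1:ℝ)/2) * (η (e 1) (e 3)) + ((1:ℝ)/2) * (η (e 1) (e 3)) * (ω (e 1) (e 3)) * (ω (e 1) (e 3)) + ((1:ℝ)/2) * (η (e 1) (e 2)) * (ω (e 1) (e 2)) * (ω (e 1) (e 3)) + ((1:ℝ)/2) * (η (e 0) (e 3)) * (ω (e 0) (e 3)) * (ω (e 1) (e 3)) + ((1:ℝ)/2) * (η (e 0) (e 2)) * (ω (e 0) (e 3)) * (ω (e 1) (e 2)) + ((1:ℝ)/2) * (η (e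 0) (e 2)) * (ω (e 0) (e 1)) * (ω (e 2) (e 3)) + ((1:ℝ)/2) * (η (e 0) (e 1)) * (ω (e 0) (e 1)) * (ω (e 1) (e 3))) := by
    rw [hηp, hJe 1, hJe 3]
    simp only [map_add, map_smul, LinearMap.add_apply, LinearMap.smul_apply, smul_eq_mul]
    simp only [hsa10, hsa20, hsa30, hsa21, hsa31, hsa32, hda0, hda1, hda2, hda3,
      hsw10, hsw20, hsw30, hsw21, hsw31, hsw32, hdw0, hdw1, hdw2, hdw3]
    ring
  have hb23 : ηp (e 2) (e 3) = (((1:ℝ)/2) * (η (e 2) (e 3)) + ((1:ℝ)/2) * (η (e 2) (e 3)) * (ω (e 2) (e 3)) * (ω (e 2) (e 3)) + ((1:ℝ)/2) * (η (e 1) (e 3)) * (ω (e 1) (e 3)) * (ω (e 2) (e 3)) + ((1:ℝ)/2) * (η (e 1) (e 2)) * (ω (e 1) (e 2)) * (ω (e 2) (e 3)) + ((1:ℝ)/2) * (η (e 0) (e 3)) * (ω (e 0) (e 3)) * (ω (e 2) (e 3)) + ((1:ℝ)/2) * (η (e 0) (e 2)) * (ω (e 0) (e 2)) * (ω (e 2)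 (e 3)) + ((-1:ℝ)/2) * (η (e 0) (e 1)) * (ω (e 0) (e 3)) * (ω (e 1) (e 2)) + ((1:ℝ)/2) * (η (e 0) (e 1)) * (ω (e 0) (e 2)) * (ω (e 1) (e 3))) := by
    rw [hηp, hJe 2, hJe 3]
    simp only [map_add, map_smul, LinearMap.add_apply, LinearMap.smul_apply, smul_eq_mul]
    simp only [hsa10, hsa20, hsa30, hsa21, hsa31, hsa32, hda0, hda1, hda2, hda3,
      hsw10, hsw20, hsw30, hsw21, hsw31, hsw32, hdw0, hdw1, hdw2, hdw3]
    ring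

  have hN : (∑ i : Fin 4, ∑ j ∈ Finset.Ioi i, (ηp (e i) (e j)) ^ 2) =
      ηp (e 0) (e 1) ^ 2 + ηp (e 0) (e 2) ^ 2 + ηp (e 0) (e 3) ^ 2 +
        ηp (e 1) (e 2) ^ 2 + ηp (e 1) (e 3) ^ 2 + ηp (e 2) (e 3) ^ 2 := by
    rw [Fin.sum_univ_four, show Finset.Ioi (0:Fin 4) = {1,2,3} by decide,
      show Finset.Ioi (1:Fin 4) = {2,3} by decide, show Finset.Ioi (2:Fin 4) = {3} by decide,
      show Finset.Ioi (3:Fin 4) = ∅ by decide]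
    simp [Finset.sum_insert]
    try ring
  rcases hcase with ⟨hu, ht, hs⟩ | ⟨hu, ht, hs⟩
  · -- case: ω is selfdual (ε = 1)
    have key1 : ηp (e 0) (e 1) + ηp (e 2) (e 3) = (η (e 0) (e 1) * ω (e 2) (e 3) - η (e 0) (e 2) * ω (e 1) (e 3) + η (e 0) (e 3) * ω (e 1) (e 2) + η (e 1) (e 2) * ω (e 0) (e 3) - η (e 1) (e 3) * ω (e 0) (e 2) + η (e 2) (e 3) * ω (e 0) (e 1)) * ω (e 0) (e 1) := by
      linear_combination ((1)) * hb01 +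
        ((1)) * hb23 +
        (((1:ℝ)/2) * (η (e 2) (e 3)) * (ω (e 2) (e 3)) + ((1:ℝ)/2) * (η (e 2) (e 3)) * (ω (e 0) (e 1)) + ((1:ℝ)/2) * (η (e 1) (e 3)) * (ω (e 1) (e 3)) + ((1:ℝ)/2) * (η (e 1) (e 2)) * (ω (e 1) (e 2)) + ((1:ℝ)/2) * (η (e 0) (e 3)) * (ω (e 0) (e 3)) + ((1:ℝ)/2) * (η (e 0) (e 2)) * (ω (e 0) (e 2)) + (-1) * (η (e 0) (e 1)) * (ω (e 0) (e 1))) * hu +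
        (((1:ℝ)/2) * (η (e 2) (e 3)) * (ω (e 0) (e 2)) + (η (e 1) (e 3)) * (ω (e 0) (e 1)) + (η (e 0) (e 2)) * (ω (e 0) (e 1)) + ((1:ℝ)/2) * (η (e 0) (e 1)) * (ω (e 0) (e 2))) * ht +
        (((-1:ℝ)/2) * (η (e 2) (e 3)) * (ω (e 0) (e 3)) + (η (e 1) (e 2)) * (ω (e 0) (e 1)) + (-1) * (η (e 0) (e 3)) * (ω (e 0) (e 1)) + ((-1:ℝ)/2) * (η (e 0) (e 1)) * (ω (e 0) (e 3))) * hs +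
        (((-1:ℝ)/2) * (η (e 2) (e 3)) + ((-1:ℝ)/2) * (η (e 0) (e 1))) * g0
    have key2 : ηp (e 0) (e 2) - ηp (e 1) (e 3) = (η (e 0) (e 1) * ω (e 2) (e 3) - η (e 0) (e 2) * ω (e 1) (e 3) + η (e 0) (e 3) * ω (e 1) (e 2) + η (e 1) (e 2) * ω (e 0) (e 3) - η (e 1) (e 3) * ω (e 0) (e 2) + η (e 2) (e 3) * ω (e 0) (e 1)) * ω (e 0) (e 2) := by
      linear_combination ((1)) * hb02 +
        ((-1)) * hb13 +
        (((-1:ℝ)/2) * (η (e 2) (e 3)) * (ω (e 1) (e 3)) + ((1:ℝ)/2) * (η (e 2) (e 3)) * (ω (e 0) (e 2)) + ((1:ℝ)/2) * (η (e 1) (e 3)) * (ω (e 0) (e 1)) + ((-1:ℝ)/2) * (η (e 0) (e 2)) * (ω (e 0) (e 1)) + (-1) * (η (e 0) (e 1)) * (ω (e 0) (e 2))) * hu +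
        (((-1:ℝ)/2) * (η (e 2) (e 3)) * (ω (e 0) (e 1)) + ((-1:ℝ)/2) * (η (e 1) (e 3)) * (ω (e 1) (e 3)) + ((1:ℝ)/2) * (η (e 1) (e 3)) * (ω (e 0) (e 2)) + ((-1:ℝ)/2) * (η (e 1) (e 2)) * (ω (e 1) (e 2)) + ((-1:ℝ)/2) * (η (e 0) (e 3)) * (ω (e 0) (e 3)) + (η (e 0) (e 2)) * (ω (e 0) (e 2)) + ((-1:ℝ)/2) * (η (e 0) (e 1)) * (ω (e 0) (e 1))) * ht +
        (((1:ℝ)/2) * (η (e 1) (e 3)) * (ω (e 0) (e 3)) + (η (e 1) (e 2)) * (ω (e 0) (e 2)) + (-1) * (η (e 0) (e 3)) * (ω (e 0) (e 2)) + ((-1:ℝ)/2) * (η (e 0) (e 2)) * (ω (e 0) (e 3))) * hs +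
        (((1:ℝ)/2) * (η (e 1) (e 3)) + ((-1:ℝ)/2) * (η (e 0) (e 2))) * g0
    have key3 : ηp (e 0) (e 3) + ηp (e 1) (e 2) = (η (e 0) (e 1) * ω (e 2) (e 3) - η (e 0) (e 2) * ω (e 1) (e 3) + η (e 0) (e 3) * ω (e 1) (e 2) + η (e 1) (e 2) * ω (e 0) (e 3) - η (e 1) (e 3) * ω (e 0) (e 2) + η (e 2) (e 3) * ω (e 0) (e 1)) * ω (e 0) (e 3) := by
      linear_combination ((1)) * hb03 +
        ((1)) * hb12 +
        (((1:ℝ)/2) * (η (e 2) (e 3)) * (ω (e 1) (e 2)) + ((1:ℝ)/2) * (η (e 2) (e 3)) * (ω (e 0) (e 3)) + ((-1:ℝ)/2) * (η (e 1) (e 2)) * (ω (e 0) (e 1)) + ((-1:ℝ)/2) * (η (e 0) (e 3)) * (ω (e 0) (e 1)) + (-1) * (η (e 0) (e 1)) * (ω (e 0) (e 3))) * hu +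
        (((1:ℝ)/2) * (η (e 1) (e 3)) * (ω (e 1) (e 2)) + ((1:ℝ)/2) * (η (e 1) (e 3)) * (ω (e 0) (e 3)) + ((1:ℝ)/2) * (η (e 1) (e 2)) * (ω (e 0) (e 2)) + ((1:ℝ)/2) * (η (e 0) (e 3)) * (ω (e 0) (e 2)) + (η (e 0) (e 2)) * (ω (e 0) (e 3))) * ht +
        (((1:ℝ)/2) * (η (e 2) (e 3)) * (ω (e 0) (e 1)) + ((-1:ℝ)/2) * (η (e 1) (e 3)) * (ω (e 0) (e 2)) + ((1:ℝ)/2) * (η (e 1) (e 2)) * (ω (e 1) (e 2)) + ((1:ℝ)/2) * (η (e 1) (e 2)) * (ω (e 0) (e 3)) + (-1) * (η (e 0) (e 3)) * (ω (e 0) (e 3)) + ((1:ℝ)/2) * (η (e 0) (e 2)) * (ω (e 0) (e 2)) + ((1:ℝ)/2) * (η (e 0) (e 1)) * (ω (e 0) (e 1))) * hs +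
        (((-1:ℝ)/2) * (η (e 1) (e 2)) + ((-1:ℝ)/2) * (η (e 0) (e 3))) * g0
    have hkey : 2 * (ηp (e 0) (e 1) * ηp (e 2) (e 3) - ηp (e 0) (e 2) * ηp (e 1) (e 3) + ηp (e 0) (e 3) * ηp (e 1) (e 2)) + (ηp (e 0) (e 1) ^ 2 + ηp (e 0) (e 2) ^ 2 + ηp (e 0) (e 3) ^ 2 + ηp (e 1) (e 2) ^ 2 + ηp (e 1) (e 3) ^ 2 + ηp (e 2) (e 3) ^ 2) = (η (e 0) (e 1) * ω (e 2) (e 3) - η (e 0) (e 2) * ω (e 1) (e 3) + η (e 0) (e 3) * ω (e 1) (e 2) + η (e 1) (e 2) * ω (e 0) (e 3) - η (e 1) (e 3) * ω (e 0) (e 2) + η (e 2) (e 3) * ω (e 0) (e 1)) ^ 2 := by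
      linear_combination (ηp (e 0) (e 1) + ηp (e 2) (e 3) + (η (e 0) (e 1) * ω (e 2) (e 3) - η (e 0) (e 2) * ω (e 1) (e 3) + η (e 0) (e 3) * ω (e 1) (e 2) + η (e 1) (e 2) * ω (e 0) (e 3) - η (e 1) (e 3) * ω (e 0) (e 2) + η (e 2) (e 3) * ω (e 0) (e 1)) * ω (e 0) (e 1)) * key1 +
        (ηp (e 0) (e 2) - ηp (e 1) (e 3) + (η (e 0) (e 1) * ω (e 2) (e 3) - η (e 0) (e 2) * ω (e 1) (e 3) + η (e 0) (e 3) * ω (e 1) (e 2) + η (e 1) (e 2) * ω (e 0) (e 3) - η (e 1) (e 3) * ω (e 0) (e 2) + η (e 2) (e 3) * ω (e 0) (e 1)) * ω (e 0) (e 2)) * key2 +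
        (ηp (e 0) (e 3) + ηp (e 1) (e 2) + (η (e 0) (e 1) * ω (e 2) (e 3) - η (e 0) (e 2) * ω (e 1) (e 3) + η (e 0) (e 3) * ω (e 1) (e 2) + η (e 1) (e 2) * ω (e 0) (e 3) - η (e 1) (e 3) * ω (e 0) (e 2) + η (e 2) (e 3) * ω (e 0) (e 1)) * ω (e 0) (e 3)) * key3 + (η (e 0) (e 1) * ω (e 2) (e 3) - η (e 0) (e 2) * ω (e 1) (e 3) + η (e 0) (e 3) * ω (e 1) (e 2) + η (e 1) (e 2) * ω (e 0) (e 3) - η (e 1) (e 3) * ω (e 0) (e 2) + η (e 2) (e 3) * ω (e 0) (e 1)) ^ 2 * g0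
    have hWω : ω (e 0) (e 1) * ω (e 2) (e 3) - ω (e 0) (e 2) * ω (e 1) (e 3) + ω (e 0) (e 3) * ω (e 1) (e 2) +
        ω (e 1) (e 2) * ω (e 0) (e 3) - ω (e 1) (e 3) * ω (e 0) (e 2) + ω (e 2) (e 3) * ω (e 0) (e 1) = 2 := by
      linear_combination 2 * ω (e 0) (e 1) * hu - 2 * ω (e 0) (e 2) * ht + 2 * ω (e 0) (e 3) * hs + 2 * g0
    constructor
    · intro h v₁ v₂ v₃ v₄
      obtain ⟨D, hD⟩ := hred v₁ v₂ v₃ v₄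
      rw [hD ηp ηp hηpf hηpf, hD ω ω hωf hωf]
      have h0 := h (e 0) (e 1) (e 2) (e 3)
      simp only [hw] at h0
      have hbase : 2 * w ηp ηp (e 0) (e 1) (e 2) (e 3) =
          -(∑ i : Fin 4, ∑ j ∈ Finset.Ioi i, (ηp (e i) (e j)) ^ 2) * w ω ω (e 0) (e 1) (e 2) (e 3) := by
        simp only [hw]
        rw [hN]
        linear_combination 2 * hkey + (ηp (e 0) (e 1) ^ 2 + ηp (e 0) (e 2) ^ 2 + ηp (e 0) (e 3) ^ 2 + ηp (e 1) (e 2) ^ 2 + ηp (e 1) (e 3) ^ 2 + ηp (e 2) (e 3) ^ 2) * hWω + 2 * (η (e 0) (e 1) * ω (e 2) (e 3) - η (e 0) (e 2) * ω (e 1) (e 3) + η (e 0) (e 3) * ω (e 1) (e 2) + η (e 1) (e 2) * ω (e 0) (e 3) - η (e 1) (e 3) * ω (e 0) (e 2) + η (e 2) (e 3) * ω (e 0) (e 1)) * h0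
      linear_combination D * hbase
    · intro h v₁ v₂ v₃ v₄
      obtain ⟨D, hD⟩ := hred v₁ v₂ v₃ v₄
      rw [hD (fun u v => η u v) ω hηf hωf]
      have h1 := h (e 0) (e 1) (e 2) (e 3)
      simp only [hw] at h1
      rw [hN] at h1
      have hS2 : (η (e 0) (e 1) * ω (e 2) (e 3) - η (e 0) (e 2) * ω (e 1) (e 3) + η (e 0) (e 3) * ω (e 1) (e 2) + η (e 1) (e 2) * ω (e 0) (e 3) - η (e 1) (e 3) * ω (e 0) (e 2) + η (e 2) (e 3) * ω (e 0) (e 1)) ^ 2 = 0 := by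
        linear_combination ((1:ℝ)/2) * h1 - hkey  - ((1:ℝ)/2) * (ηp (e 0) (e 1) ^ 2 + ηp (e 0) (e 2) ^ 2 + ηp (e 0) (e 3) ^ 2 + ηp (e 1) (e 2) ^ 2 + ηp (e 1) (e 3) ^ 2 + ηp (e 2) (e 3) ^ 2) * hWω
      have hS : (η (e 0) (e 1) * ω (e 2) (e 3) - η (e 0) (e 2) * ω (e 1) (e 3) + η (e 0) (e 3) * ω (e 1) (e 2) + η (e 1) (e 2) * ω (e 0) (e 3) - η (e 1) (e 3) * ω (e 0) (e 2) + η (e 2) (e 3) * ω (e 0) (e 1)) = 0 := pow_eq_zero_iff (two_ne_zero) |>.mp hS2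
      have hbase : w (fun u v => η u v) ω (e 0) (e 1) (e 2) (e 3) = 0 := by
        simp only [hw]
        linear_combination hS
      rw [hbase, mul_zero]

  · -- case: ω is anti-selfdual (ε = -1)
    have key1 : ηp (e 0) (e 1) - ηp (e 2) (e 3) = -((η (e 0) (e 1) * ω (e 2) (e 3) - η (e 0) (e 2) * ω (e 1) (e 3) + η (e 0) (e 3) * ω (e 1) (e 2) + η (e 1) (e 2) * ω (e 0) (e 3) - η (e 1) (e 3) * ω (e 0) (e 2) + η (e 2) (e 3) * ω (e 0) (e 1)) * ω (e 0) (e 1)) := by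
      linear_combination ((1)) * hb01 +
        ((-1)) * hb23 +
        (((-1:ℝ)/2) * (η (e 2) (e 3)) * (ω (e 2) (e 3)) + ((1:ℝ)/2) * (η (e 2) (e 3)) * (ω (e 0) (e 1)) + ((-1:ℝ)/2) * (η (e 1) (e 3)) * (ω (e 1) (e 3)) + ((-1:ℝ)/2) * (η (e 1) (e 2)) * (ω (e 1) (e 2)) + ((-1:ℝ)/2) * (η (e 0) (e 3)) * (ω (e 0) (e 3)) + ((-1:ℝ)/2) * (η (e 0) (e 2)) * (ω (e 0) (e 2)) + (η (e 0) (e 1)) * (ω (e 0) (e 1))) * hu +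
        (((1:ℝ)/2) * (η (e 2) (e 3)) * (ω (e 0) (e 2)) + (η (e 1) (e 3)) * (ω (e 0) (e 1)) + (-1) * (η (e 0) (e 2)) * (ω (e 0) (e 1)) + ((-1:ℝ)/2) * (η (e 0) (e 1)) * (ω (e 0) (e 2))) * ht +
        (((-1:ℝ)/2) * (η (e 2) (e 3)) * (ω (e 0) (e 3)) + (η (e 1) (e 2)) * (ω (e 0) (e 1)) + (η (e 0) (e 3)) * (ω (e 0) (e 1)) + ((1:ℝ)/2) * (η (e 0) (e 1)) * (ω (e 0) (e 3))) * hs +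
        (((1:ℝ)/2) * (η (e 2) (e 3)) + ((-1:ℝ)/2) * (η (e 0) (e 1))) * g0
    have key2 : ηp (e 0) (e 2) + ηp (e 1) (e 3) = -((η (e 0) (e 1) * ω (e 2) (e 3) - η (e 0) (e 2) * ω (e 1) (e 3) + η (e 0) (e 3) * ω (e 1) (e 2) + η (e 1) (e 2) * ω (e 0) (e 3) - η (e 1) (e 3) * ω (e 0) (e 2) + η (e 2) (e 3) * ω (e 0) (e 1)) * ω (e 0) (e 2)) := by
      linear_combination ((1)) * hb02 +
        ((1)) * hb13 +
        (((1:ℝ)/2) * (η (e 2) (e 3)) * (ω (e 1) (e 3)) + ((1:ℝ)/2) * (η (e 2) (e 3)) * (ω (e 0) (e 2)) + ((1:ℝ)/2) * (η (e 1) (e 3)) * (ω (e 0) (e 1)) + ((1:ℝ)/2) * (η (e 0) (e 2)) * (ω (e 0) (e 1)) + (η (e 0) (e 1)) * (ω (e 0) (e 2))) * hu +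
        (((-1:ℝ)/2) * (η (e 2) (e 3)) * (ω (e 0) (e 1)) + ((1:ℝ)/2) * (η (e 1) (e 3)) * (ω (e 1) (e 3)) + ((1:ℝ)/2) * (η (e 1) (e 3)) * (ω (e 0) (e 2)) + ((1:ℝ)/2) * (η (e 1) (e 2)) * (ω (e 1) (e 2)) + ((1:ℝ)/2) * (η (e 0) (e 3)) * (ω (e 0) (e 3)) + (-1) * (η (e 0) (e 2)) * (ω (e 0) (e 2)) + ((1:ℝ)/2) * (η (e 0) (e 1)) * (ω (e 0) (e 1))) * ht +
        (((1:ℝ)/2) * (η (e 1) (e 3)) * (ω (e 0) (e 3)) + (η (e 1) (e 2)) * (ω (e 0) (e 2)) + (η (e 0) (e 3)) * (ω (e 0) (e 2)) + ((1:ℝ)/2) * (η (e 0) (e 2)) * (ω (e 0) (e 3))) * hs +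
        (((-1:ℝ)/2) * (η (e 1) (e 3)) + ((-1:ℝ)/2) * (η (e 0) (e 2))) * g0
    have key3 : ηp (e 0) (e 3) - ηp (e 1) (e 2) = -((η (e 0) (e 1) * ω (e 2) (e 3) - η (e 0) (e 2) * ω (e 1) (e 3) + η (e 0) (e 3) * ω (e 1) (e 2) + η (e 1) (e 2) * ω (e 0) (e 3) - η (e 1) (e 3) * ω (e 0) (e 2) + η (e 2) (e 3) * ω (e 0) (e 1)) * ω (e 0) (e 3)) := by
      linear_combination ((1)) * hb03 +
        ((-1)) * hb12 +
        (((-1:ℝ)/2) * (η (e 2) (e 3)) * (ω (e 1) (e 2)) + ((1:ℝ)/2) * (η (e 2) (e 3)) * (ω (e 0) (e 3)) + ((-1:ℝ)/2) * (η (e 1) (e 2)) * (ω (e 0) (e 1)) + ((1:ℝ)/2) * (η (e 0) (e 3)) * (ω (e 0) (e 1)) + (η (e 0) (e 1)) * (ω (e 0) (e 3))) * hu +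
        (((-1:ℝ)/2) * (η (e 1) (e 3)) * (ω (e 1) (e 2)) + ((1:ℝ)/2) * (η (e 1) (e 3)) * (ω (e 0) (e 3)) + ((1:ℝ)/2) * (η (e 1) (e 2)) * (ω (e 0) (e 2)) + ((-1:ℝ)/2) * (η (e 0) (e 3)) * (ω (e 0) (e 2)) + (-1) * (η (e 0) (e 2)) * (ω (e 0) (e 3))) * ht +
        (((1:ℝ)/2) * (η (e 2) (e 3)) * (ω (e 0) (e 1)) + ((-1:ℝ)/2) * (η (e 1) (e 3)) * (ω (e 0) (e 2)) + ((-1:ℝ)/2) * (η (e 1) (e 2)) * (ω (e 1) (e 2)) + ((1:ℝ)/2) * (η (e 1) (e 2)) * (ω (e 0) (e 3)) + (η (e 0) (e 3)) * (ω (e 0) (e 3)) + ((-1:ℝ)/2) * (η (e 0) (e 2)) * (ω (e 0) (e 2)) + ((-1:ℝ)/2) * (η (e 0) (e 1)) * (ω (e 0) (e 1))) * hs +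
        (((1:ℝ)/2) * (η (e 1) (e 2)) + ((-1:ℝ)/2) * (η (e 0) (e 3))) * g0
    have hkey : (ηp (e 0) (e 1) ^ 2 + ηp (e 0) (e 2) ^ 2 + ηp (e 0) (e 3) ^ 2 + ηp (e 1) (e 2) ^ 2 + ηp (e 1) (e 3) ^ 2 + ηp (e 2) (e 3) ^ 2) - 2 * (ηp (e 0) (e 1) * ηp (e 2) (e 3) - ηp (e 0) (e 2) * ηp (e 1) (e 3) + ηp (e 0) (e 3) * ηp (e 1) (e 2)) = (η (e 0) (e 1) * ω (e 2) (e 3) - η (e 0) (e 2) * ω (e 1) (e 3) + η (e 0) (e 3) * ω (e 1) (e 2) + η (e 1) (e 2) * ω (e 0) (e 3) - η (e 1) (e 3) * ω (e 0) (e 2) + η (e 2) (e 3) * ω (e 0) (e 1)) ^ 2 := by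
      linear_combination (ηp (e 0) (e 1) - ηp (e 2) (e 3) - (η (e 0) (e 1) * ω (e 2) (e 3) - η (e 0) (e 2) * ω (e 1) (e 3) + η (e 0) (e 3) * ω (e 1) (e 2) + η (e 1) (e 2) * ω (e 0) (e 3) - η (e 1) (e 3) * ω (e 0) (e 2) + η (e 2) (e 3) * ω (e 0) (e 1)) * ω (e 0) (e 1)) * key1 +
        (ηp (e 0) (e 2) + ηp (e 1) (e 3) - (η (e 0) (e 1) * ω (e 2) (e 3) - η (e 0) (e 2) * ω (e 1) (e 3) + η (e 0) (e 3) * ω (e 1) (e 2) + η (e 1) (e 2) * ω (e 0) (e 3) - η (e 1) (e 3) * ω (e 0) (e 2) + η (e 2) (e 3) * ω (e 0) (e 1)) * ω (e 0) (e 2)) * key2 +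
        (ηp (e 0) (e 3) - ηp (e 1) (e 2) - (η (e 0) (e 1) * ω (e 2) (e 3) - η (e 0) (e 2) * ω (e 1) (e 3) + η (e 0) (e 3) * ω (e 1) (e 2) + η (e 1) (e 2) * ω (e 0) (e 3) - η (e 1) (e 3) * ω (e 0) (e 2) + η (e 2) (e 3) * ω (e 0) (e 1)) * ω (e 0) (e 3)) * key3 + (η (e 0) (e 1) * ω (e 2) (e 3) - η (e 0) (e 2) * ω (e 1) (e 3) + η (e 0) (e 3) * ω (e 1) (e 2) + η (e 1) (e 2) * ω (e 0) (e 3) - η (e 1) (e 3) * ω (e 0) (e 2) + η (e 2) (e 3) * ω (e 0) (e 1)) ^ 2 * g0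
    have hWω : ω (e 0) (e 1) * ω (e 2) (e 3) - ω (e 0) (e 2) * ω (e 1) (e 3) + ω (e 0) (e 3) * ω (e 1) (e 2) +
        ω (e 1) (e 2) * ω (e 0) (e 3) - ω (e 1) (e 3) * ω (e 0) (e 2) + ω (e 2) (e 3) * ω (e 0) (e 1) = (-2 : ℝ) := by
      linear_combination 2 * ω (e 0) (e 1) * hu - 2 * ω (e 0) (e 2) * ht + 2 * ω (e 0) (e 3) * hs - 2 * g0
    constructor
    · intro h v₁ v₂ v₃ v₄
      obtain ⟨D, hD⟩ := hred v₁ v₂ v₃ v₄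
      rw [hD ηp ηp hηpf hηpf, hD ω ω hωf hωf]
      have h0 := h (e 0) (e 1) (e 2) (e 3)
      simp only [hw] at h0
      have hbase : 2 * w ηp ηp (e 0) (e 1) (e 2) (e 3) =
          -(∑ i : Fin 4, ∑ j ∈ Finset.Ioi i, (ηp (e i) (e j)) ^ 2) * w ω ω (e 0) (e 1) (e 2) (e 3) := by
        simp only [hw]
        rw [hN]
        linear_combination (-2 : ℝ) * hkey + (ηp (e 0) (e 1) ^ 2 + ηp (e 0) (e 2) ^ 2 + ηp (e 0) (e 3) ^ 2 + ηp (e 1) (e 2) ^ 2 + ηp (e 1) (e 3) ^ 2 + ηp (e 2) (e 3) ^ 2) * hWω + (-2 : ℝ) * (η (e 0) (e 1) * ω (e 2) (e 3) - η (e 0) (e 2) * ω (e 1) (e 3) + η (e 0) (e 3) * ω (e 1) (e 2) + η (e 1) (e 2) * ω (e 0) (e 3) - η (e 1) (e 3) * ω (e 0) (e 2) + η (e 2) (e 3) * ω (e 0) (e 1)) * h0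
      linear_combination D * hbase
    · intro h v₁ v₂ v₃ v₄
      obtain ⟨D, hD⟩ := hred v₁ v₂ v₃ v₄
      rw [hD (fun u v => η u v) ω hηf hωf]
      have h1 := h (e 0) (e 1) (e 2) (e 3)
      simp only [hw] at h1
      rw [hN] at h1
      have hS2 : (η (e 0) (e 1) * ω (e 2) (e 3) - η (e 0) (e 2) * ω (e 1) (e 3) + η (e 0) (e 3) * ω (e 1) (e 2) + η (e 1) (e 2) * ω (e 0) (e 3) - η (e 1) (e 3) * ω (e 0) (e 2) + η (e 2) (e 3) * ω (e 0) (e 1)) ^ 2 = 0 := by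
        linear_combination (-(1:ℝ)/2) * h1 - hkey  + ((1:ℝ)/2) * (ηp (e 0) (e 1) ^ 2 + ηp (e 0) (e 2) ^ 2 + ηp (e 0) (e 3) ^ 2 + ηp (e 1) (e 2) ^ 2 + ηp (e 1) (e 3) ^ 2 + ηp (e 2) (e 3) ^ 2) * hWω
      have hS : (η (e 0) (e 1) * ω (e 2) (e 3) - η (e 0) (e 2) * ω (e 1) (e 3) + η (e 0) (e 3) * ω (e 1) (e 2) + η (e 1) (e 2) * ω (e 0) (e 3) - η (e 1) (e 3) * ω (e 0) (e 2) + η (e 2) (e 3) * ω (e 0) (e 1)) = 0 := pow_eq_zero_iff (two_ne_zero) |>.mp hS2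
      have hbase : w (fun u v => η u v) ω (e 0) (e 1) (e 2) (e 3) = 0 := by
        simp only [hw]
        linear_combination hS
      rw [hbase, mul_zero]
end
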